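/- arXiv:2605.07595 — 9 statements merged into one kernel-verified Lean document; each statement's English description precedes it below -/
import Mathlib

section
/- Let q be a prime power, H ∈ 𝔽_q^{r×n}, and C = ker(H). Let 0 ≤ E ≤ E⁺ ≤ n and 0 ≤ τ ≤ 1. Suppose C satisfies the (E,E⁺,τ)-line proximity-gap property: every affine line L = {s₀ + α s₁ : α ∈ 𝔽_q} ⊆ 𝔽_q^r with |L ∩ H_E|/|L| > τ satisfies L ⊆ H_{E⁺}. Then C satisfies the (E,E⁺,τ·q/(q−1))-space proximity-gap property: every affine subspace S ⊆ 𝔽_q^r (a coset of a linear subspace) with |S ∩ H_E|/|S| > τ·q/(q−1) satisfies S ⊆ H_{E⁺}. -/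
/-!
Suppose `S = t + W` has a point `t` outside `H_{E⁺}` (hence outside `H_E`). By the line property,
every line `t + F d` with `d ∈ W` meets `H_E` in at most `τ q` points. A point `t + d` of
`S ∩ H_E` lies on such a line as `t + α (α⁻¹ d)` for each of the `q - 1` scalars `α ≠ 0`, so
double counting the pairs `(d, α)` gives `(q - 1) |S ∩ H_E| ≤ |W| τ q = |S| τ q`.
-/

/-- Syndrome ball: set of syndromes of words of Hamming weight at most `E`. -/
def syndromeBall {F : Type} [Field F] [Fintype F] [DecidableEq F] {r n : ℕ}
    (H : Matrix (Fin r) (Fin n) F) (E : ℕ) : Set (Fin r → F) :=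
  {s | ∃ x : Fin n → F, hammingNorm x ≤ E ∧ H.mulVec x = s}

/-- The affine line `{s₀ + α s₁ : α ∈ F}`. -/
def affLine {F : Type} [Field F] {r : ℕ} (s₀ s₁ : Fin r → F) : Set (Fin r → F) :=
  {t | ∃ α : F, t = s₀ + α • s₁}

open Finset

theorem sum_card_filter_smul_mem {F M : Type*} [DivisionRing F] [Fintype F] [DecidableEq F]
    [AddCommGroup M] [Module F M] [Fintype M] [DecidableEq M] {G : Finset M} (hG : 0 ∉ G) :
    ∑ d : M, #{α : F | α • d ∈ G} = (Fintype.card F - 1) * #G := by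
  have hfiber (α : F) : #{d : M | α • d ∈ G} = if α = 0 then 0 else #G := by
    split_ifs with hα
    · simp [hα, hG]
    · simpa using card_equiv (MulAction.toPerm (Units.mk0 α hα)) (s := {d : M | α • d ∈ G})
        (t := G) (by simp)
  simp_rw [card_filter]
  rw [sum_comm]
  simp_rw [← card_filter, hfiber, sum_ite, sum_const_zero, sum_const, smul_eq_mul, zero_add,
    filter_ne', card_erase_of_mem (mem_univ _), card_univ]

theorem syndromeBall_mono {F : Type} [Field F] [Fintype F] [DecidableEq F] {r n : ℕ}
    (H : Matrix (Fin r) (Fin n) F) {E E' : ℕ} (h : E ≤ E') :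
    syndromeBall H E ⊆ syndromeBall H E' :=
  fun _ ⟨x, hx, hxs⟩ => ⟨x, hx.trans h, hxs⟩

section AffLine

variable {F : Type} [Field F] {r : ℕ} (s₀ s₁ : Fin r → F)

theorem affLine_eq_range : affLine s₀ s₁ = Set.range fun α : F => s₀ + α • s₁ := by
  ext x
  simp only [affLine, Set.mem_ofPred_eq, Set.mem_range, eq_comm]

theorem mem_affLine_self : s₀ ∈ affLine s₀ s₁ := ⟨0, by simp⟩

theorem ncard_affLine_le [Fintype F] : (affLine s₀ s₁).ncard ≤ Fintype.card F := by
  rw [affLine_eq_range, ← Set.image_univ, ← Nat.card_eq_fintype_card, ← Set.ncard_univ]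
  exact Set.ncard_image_le

theorem ncard_setOf_add_smul_mem_le [Finite F] {A : Set (Fin r → F)} (hA : s₀ ∉ A) :
    {α : F | s₀ + α • s₁ ∈ A}.ncard ≤ (affLine s₀ s₁ ∩ A).ncard := by
  rcases eq_or_ne s₁ 0 with rfl | hs₁
  · simp [hA]
  · rw [← Set.ncard_image_of_injective _
      ((add_right_injective s₀).comp (smul_left_injective F hs₁))]
    refine Set.ncard_le_ncard ?_
    rintro _ ⟨α, hα, rfl⟩
    exact ⟨⟨α, rfl⟩, hα⟩

theorem ncard_affLine_inter_le [Fintype F] {τ : ℝ} (hτ : 0 ≤ τ) {A B : Set (Fin r → F)}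
    (hB : s₀ ∉ B)
    (hgap : τ < ((affLine s₀ s₁ ∩ A).ncard : ℝ) / (affLine s₀ s₁).ncard → affLine s₀ s₁ ⊆ B) :
    ((affLine s₀ s₁ ∩ A).ncard : ℝ) ≤ τ * Fintype.card F := by
  have hpos : (0 : ℝ) < (affLine s₀ s₁).ncard := by
    exact_mod_cast (Set.ncard_pos (Set.toFinite _)).mpr ⟨s₀, mem_affLine_self s₀ s₁⟩
  have hle : ((affLine s₀ s₁ ∩ A).ncard : ℝ) / (affLine s₀ s₁).ncard ≤ τ :=
    not_lt.mp fun h => hB (hgap h (mem_affLine_self s₀ s₁))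
  calc ((affLine s₀ s₁ ∩ A).ncard : ℝ) ≤ τ * (affLine s₀ s₁).ncard := (div_le_iff₀ hpos).mp hle
    _ ≤ τ * Fintype.card F := by gcongr; exact_mod_cast ncard_affLine_le s₀ s₁

end AffLine

theorem ncard_coset_inter {F V : Type*} [Ring F] [AddCommGroup V] [Module F V]
    {W : Submodule F V} [Fintype W] {v t : V} (ht : t ∈ {x | ∃ w ∈ W, x = v + w}) (A : Set V)
    [DecidablePred (· ∈ A)] :
    ({x | ∃ w ∈ W, x = v + w} ∩ A).ncard = #{d : W | t + (d : V) ∈ A} := by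
  obtain ⟨wt, hwt, rfl⟩ := ht
  have : {x | ∃ w ∈ W, x = v + w} ∩ A
      = (fun d : W => v + wt + d) '' ↑({d : W | v + wt + (d : V) ∈ A} : Finset W) := by
    ext x
    simp only [Set.mem_inter_iff, Set.mem_ofPred_eq, coe_filter, mem_univ, true_and, Set.mem_image,
      Subtype.exists]
    constructor
    · rintro ⟨⟨w, hw, rfl⟩, hx⟩
      exact ⟨w - wt, W.sub_mem hw hwt, by simpa [add_assoc] using hx, by abel⟩
    · rintro ⟨d, hd, hdA, rfl⟩
      exact ⟨⟨wt + d, W.add_mem hwt hd, by abel⟩, hdA⟩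
  rw [this, Set.ncard_image_of_injective _ fun _ _ h => Subtype.ext (add_left_cancel h),
    Set.ncard_coe_finset]

theorem stmt_1_general {F : Type} [Field F] [Fintype F] [DecidableEq F] {r n : ℕ}
    (H : Matrix (Fin r) (Fin n) F) (E Ep : ℕ) (hEEp : E ≤ Ep)
    (τ : ℝ) (hτ0 : 0 ≤ τ)
    (hline : ∀ s₀ s₁ : Fin r → F,
      τ < ((affLine s₀ s₁ ∩ syndromeBall H E).ncard : ℝ) / ((affLine s₀ s₁).ncard : ℝ) →
      affLine s₀ s₁ ⊆ syndromeBall H Ep) :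
    ∀ (W : Submodule F (Fin r → F)) (v : Fin r → F),
      τ * (Fintype.card F : ℝ) / ((Fintype.card F : ℝ) - 1) <
        (({t : Fin r → F | ∃ w ∈ W, t = v + w} ∩ syndromeBall H E).ncard : ℝ) /
          (({t : Fin r → F | ∃ w ∈ W, t = v + w}).ncard : ℝ) →
      {t : Fin r → F | ∃ w ∈ W, t = v + w} ⊆ syndromeBall H Ep := by
  classical
  intro W v hratio t ht
  by_contra htEp
  have htE : t ∉ syndromeBall H E := fun h => htEp (syndromeBall_mono H hEEp h)
  -- `S ∩ H_E`, translated by `-t` into `W`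
  let G : Finset W := {d | t + (d : Fin r → F) ∈ syndromeBall H E}
  have hdirection (d : W) : (#{α : F | α • d ∈ G} : ℝ) ≤ τ * Fintype.card F :=
    calc (#{α : F | α • d ∈ G} : ℝ)
        = {α : F | t + α • (d : Fin r → F) ∈ syndromeBall H E}.ncard := by
          rw [← Set.ncard_coe_finset]; simp [G]
      _ ≤ (affLine t d ∩ syndromeBall H E).ncard := mod_cast ncard_setOf_add_smul_mem_le t d htE
      _ ≤ τ * Fintype.card F := ncard_affLine_inter_le t d hτ0 htEp (hline t d)
  have hcount := sum_card_filter_smul_mem (F := F) (G := G) (by simpa [G] using htE)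
  have hq : (1 : ℝ) < Fintype.card F := by exact_mod_cast Fintype.one_lt_card
  have hS : ({x | ∃ w ∈ W, x = v + w}).ncard = Fintype.card W := by
    simpa using ncard_coset_inter ht Set.univ
  rw [ncard_coset_inter ht, hS, div_lt_div_iff₀ (by linarith) (mod_cast Fintype.card_pos)]
    at hratio
  have hsum : ((Fintype.card F - 1 : ℝ)) * #G ≤ Fintype.card W * (τ * Fintype.card F) := by
    calc ((Fintype.card F - 1 : ℝ)) * #G = ∑ d : W, (#{α : F | α • d ∈ G} : ℝ) := by
          rw [← Nat.cast_pred Fintype.card_pos]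
          exact_mod_cast hcount.symm
      _ ≤ ∑ _d : W, τ * Fintype.card F := sum_le_sum fun d _ => hdirection d
      _ = Fintype.card W * (τ * Fintype.card F) := by simp
  linarith

/-- If `C = ker H` satisfies the `(E,E⁺,τ)`-line proximity-gap property, then it satisfies
the `(E,E⁺,τ·q/(q−1))`-space proximity-gap property. -/
theorem stmt_1 {F : Type} [Field F] [Fintype F] [DecidableEq F] {r n : ℕ}
    (H : Matrix (Fin r) (Fin n) F) (E Ep : ℕ) (hEEp : E ≤ Ep) (hEpn : Ep ≤ n)
    (τ : ℝ) (hτ0 : 0 ≤ τ) (hτ1 : τ ≤ 1)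
    (hline : ∀ s₀ s₁ : Fin r → F,
      τ < ((affLine s₀ s₁ ∩ syndromeBall H E).ncard : ℝ) / ((affLine s₀ s₁).ncard : ℝ) →
      affLine s₀ s₁ ⊆ syndromeBall H Ep) :
    ∀ (W : Submodule F (Fin r → F)) (v : Fin r → F),
      τ * (Fintype.card F : ℝ) / ((Fintype.card F : ℝ) - 1) <
        (({t : Fin r → F | ∃ w ∈ W, t = v + w} ∩ syndromeBall H E).ncard : ℝ) /
          (({t : Fin r → F | ∃ w ∈ W, t = v + w}).ncard : ℝ) →
      {t : Fin r → F | ∃ w ∈ W, t = v + w} ⊆ syndromeBall H Ep :=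
  stmt_1_general H E Ep hEEp τ hτ0 hline
end

section
/- Let q be a prime power, H ∈ 𝔽_q^{r×n}, C = ker(H), 0 ≤ E ≤ n, and 0 ≤ τ ≤ 1. Assume that for every integer E′ with 0 ≤ E′ ≤ E, the code C has the (1,E′,E′,τ)-line correlated-agreement property: for every s₀, s₁ ∈ 𝔽_q^r with s₁ ≠ 0, if the affine line L = {s₀ + α s₁ : α ∈ 𝔽_q} satisfies |L ∩ H_{E′}|/q > τ, then there exists a matrix X = [x₀|x₁] ∈ 𝔽_q^{n×2} with Hx₀ = s₀, Hx₁ = s₁ and rowwt(X) ≤ E′. Assume further that for every x ∈ 𝔽_q^n, the number of codewords c ∈ C with d(x,c) ≤ E is strictly less than q. Then for every integer m ≥ 2, the code C has the (m,E,E,τ·q/(q−1))-space correlated-agreement property: for every affine syndrome space S = s₀ + span(s₁,…,s_m) ⊆ 𝔽_q^r with s₁,…,s_m linearly independent, if |S ∩ H_E|/|S| > τ·q/(q−1), then there exists a matrix X = [x₀|⋯|x_m] ∈ 𝔽_q^{n×(m+1)} with Hx_i = s_i for all 0 ≤ i ≤ m and rowwt(X) ≤ E. -/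
/-- The affine space `s₀ + span(s₁,…,s_m)`. -/
def affSpace {F : Type} [Field F] {r m : ℕ} (s₀ : Fin r → F) (s : Fin m → Fin r → F) :
    Set (Fin r → F) :=
  {t | ∃ β : Fin m → F, t = s₀ + ∑ i, β i • s i}

/-! If `S ∩ H_E` has density above `τ q/(q-1)` in `S`, then `S ⊆ H_E`: the lines of `S`
through a point `z ∉ H_E` carry at most `τ q` points of `H_E` each (line correlated agreement
would put `z` in the ball), and double counting over these lines bounds the density.
Let `E' ≤ E` be the least radius with `S ⊆ H_{E'}` and `p ∈ S` a syndrome all of whose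
preimages have weight at least `E'`. Each line of `S` through `p` lies in `H_{E'}`, so line
correlated agreement gives `a, b` with `Ha = p`, `Hb` the direction and, by minimality of
the weight of `a`, `supp b ⊆ supp a`. By the list-size bound fewer than `q` words `a` occur, and
the `q^m - 1` directions cannot be covered by fewer than `q` proper subspaces,
so one `a` serves a spanning set of directions. Every syndrome of `S` then has a preimage
supported in `supp a`, a set of size at most `E'`. -/

open Finset Module Matrix

theorem hammingNorm_eq_ncard {ι β : Type*} [Fintype ι] [Zero β] [DecidableEq β]
    (x : ι → β) : hammingNorm x = {i | x i ≠ 0}.ncard := by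
  rw [Set.ncard_eq_toFinset_card']
  simp [hammingNorm]

theorem hammingNorm_le_ncard_ne_zero_or {ι β : Type*} [Fintype ι] [Zero β] [DecidableEq β]
    (x y : ι → β) : hammingNorm x ≤ {i | x i ≠ 0 ∨ y i ≠ 0}.ncard := by
  rw [hammingNorm_eq_ncard]
  exact Set.ncard_le_ncard fun i hi => Or.inl hi

theorem eq_zero_of_ncard_ne_zero_or_le {ι β : Type*} [Fintype ι] [Zero β] [DecidableEq β]
    {x y : ι → β} (h : {i | x i ≠ 0 ∨ y i ≠ 0}.ncard ≤ hammingNorm x) {i : ι}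
    (hi : x i = 0) : y i = 0 := by
  rw [hammingNorm_eq_ncard] at h
  have heq := Set.eq_of_subset_of_ncard_le (fun j hj => Or.inl hj) h
  by_contra hy
  exact (heq ▸ Or.inr hy : i ∈ {j | x j ≠ 0}) hi

variable {F : Type} [Field F]

theorem mem_affSpace_iff_of_mem {r m : ℕ} {s₀ p t : Fin r → F} {s : Fin m → Fin r → F}
    (hp : p ∈ affSpace s₀ s) :
    t ∈ affSpace s₀ s ↔ ∃ γ, t = p + Fintype.linearCombination F s γ := by
  obtain ⟨β, rfl⟩ := hp
  simp only [affSpace, Set.mem_ofPred_eq, ← Fintype.linearCombination_apply]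
  constructor
  · rintro ⟨β', rfl⟩
    exact ⟨β' - β, by rw [map_sub]; abel⟩
  · rintro ⟨γ, rfl⟩
    exact ⟨β + γ, by rw [map_add, add_assoc]⟩

section Supported

variable {r n : ℕ} {H : Matrix (Fin r) (Fin n) F} {a : Fin n → F}

/-- The syndromes having a preimage supported in `supp a` form a subspace. -/
theorem exists_supported_preimage_of_mem_span {V : Type} [AddCommGroup V] [Module F V]
    {φ : V →ₗ[F] Fin r → F} {K : Set V}
    (hK : ∀ γ ∈ K, ∃ b : Fin n → F, (∀ i, a i = 0 → b i = 0) ∧ H *ᵥ b = φ γ)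
    {γ : V} (hγ : γ ∈ Submodule.span F K) :
    ∃ u : Fin n → F, (∀ i, a i = 0 → u i = 0) ∧ H *ᵥ u = φ γ := by
  classical
  let W := (Submodule.pi {i | a i = 0} fun _ => (⊥ : Submodule F F)).map H.mulVecLin
  have hKW : Submodule.span F K ≤ W.comap φ := by
    rw [Submodule.span_le]
    intro γ hγ
    obtain ⟨b, hb, hHb⟩ := hK γ hγ
    exact Submodule.mem_map.mpr
      ⟨b, Submodule.mem_pi.mpr fun i hi => (Submodule.mem_bot F).mpr (hb i hi), hHb⟩
  obtain ⟨u, hu, hHu⟩ := Submodule.mem_map.mp (hKW hγ)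
  exact ⟨u, fun i hi => (Submodule.mem_bot F).mp (Submodule.mem_pi.mp hu i hi), hHu⟩

theorem exists_lift_of_forall_supported [DecidableEq F] {E m : ℕ} {s₀ p : Fin r → F}
    {s : Fin m → Fin r → F} (hp : p ∈ affSpace s₀ s) (ha : H *ᵥ a = p)
    (haE : hammingNorm a ≤ E)
    (hlift : ∀ γ, ∃ u : Fin n → F, (∀ i, a i = 0 → u i = 0) ∧
      H *ᵥ u = Fintype.linearCombination F s γ) :
    ∃ x : Fin (m + 1) → Fin n → F, H *ᵥ x 0 = s₀ ∧ (∀ i, H *ᵥ x i.succ = s i) ∧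
      {i | ∃ j, x j i ≠ 0}.ncard ≤ E := by
  choose u hu_supp hu using hlift
  obtain ⟨β, hβ⟩ := hp
  refine ⟨Fin.cons (a - u β) fun i => u (Pi.single i 1), ?_, fun i => by simp [hu], ?_⟩
  · simp [mulVec_sub, ha, hu, hβ, Fintype.linearCombination_apply]
  · have hsupp : {i | ∃ j, (Fin.cons (a - u β) fun k => u (Pi.single k 1) :
        Fin (m + 1) → Fin n → F) j i ≠ 0} ⊆ {i | a i ≠ 0} := by
      rintro i ⟨j, hj⟩
      by_contra hai
      simp only [Set.mem_ofPred_eq, not_not] at hai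
      apply hj
      cases j using Fin.cases <;> simp [hai, hu_supp _ i hai]
    exact (Set.ncard_le_ncard hsupp).trans ((hammingNorm_eq_ncard a).symm.le.trans haE)

end Supported

variable [Fintype F]

section Counting

variable {V : Type} [AddCommGroup V] [Module F V] [Fintype V]

theorem sum_card_smul_mem_eq [DecidableEq V] (G : Finset V) (hG : (0 : V) ∉ G) :
    ∑ η : V, #{a : F | a • η ∈ G} = (Fintype.card F - 1) * #G := by
  classical
  have hrow : ∀ a : F, #{η : V | a • η ∈ G} = if a = 0 then 0 else #G := by
    intro a
    split_ifs with ha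
    · simp [ha, hG]
    · refine card_nbij' (a • ·) (a⁻¹ • ·) (fun η hη => by simpa using hη)
        (fun η hη => by simpa [smul_smul, ha] using hη) (fun η _ => ?_) (fun η _ => ?_) <;>
        simp [smul_smul, ha]
  simp_rw [card_filter]
  rw [sum_comm]
  simp_rw [← card_filter, hrow]
  simp [sum_ite, filter_ne', card_erase_of_mem]

theorem card_mul_card_le_of_card_smul_mem_le [DecidableEq V] (G : Finset V) (hG : (0 : V) ∉ G)
    (c : ℝ) (hc : ∀ η : V, η ≠ 0 → (#{a : F | a • η ∈ G} : ℝ) ≤ c) :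
    ((Fintype.card F : ℝ) - 1) * #G ≤ ((Fintype.card V : ℝ) - 1) * c := by
  have hsum : ((Fintype.card F : ℝ) - 1) * #G = ∑ η : V, (#{a : F | a • η ∈ G} : ℝ) := by
    rw [← Nat.cast_sum, sum_card_smul_mem_eq G hG, Nat.cast_mul, Nat.cast_sub Fintype.card_pos]
    simp
  have hzero : #{a : F | a • (0 : V) ∈ G} = 0 := by simp [hG]
  rw [hsum, ← add_sum_erase _ _ (mem_univ 0), hzero, Nat.cast_zero, zero_add]
  calc ∑ η ∈ univ.erase 0, (#{a : F | a • η ∈ G} : ℝ)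
      ≤ ∑ _η ∈ univ.erase (0 : V), c := sum_le_sum fun η hη => hc η (ne_of_mem_erase hη)
    _ = ((Fintype.card V : ℝ) - 1) * c := by
        rw [sum_const, card_erase_of_mem (mem_univ _), card_univ, nsmul_eq_mul,
          Nat.cast_sub Fintype.card_pos, Nat.cast_one]

theorem natCard_submodule_le_of_ne_top {U : Submodule F V} (hU : U ≠ ⊤) :
    Nat.card U ≤ Fintype.card F ^ (finrank F V - 1) := by
  rw [natCard_eq_pow_finrank (K := F), Nat.card_eq_fintype_card]
  exact Nat.pow_le_pow_right Fintype.card_pos (by have := Submodule.finrank_lt hU; omega)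

/-- Pigeonhole: fewer than `q` fibres cannot all span proper subspaces, since each then holds at
most `q^(d-1) - 1` of the `q^d - 1` nonzero vectors. -/
theorem exists_span_fiber_eq_top {α : Type} (hV : 0 < finrank F V) (f : V → α) (L : Finset α)
    (hL : #L < Fintype.card F) (hf : ∀ v, v ≠ 0 → f v ∈ L) :
    ∃ a ∈ L, Submodule.span F {v | v ≠ 0 ∧ f v = a} = ⊤ := by
  classical
  by_contra! hproper
  obtain ⟨k, hk⟩ : ∃ k, finrank F V = k + 1 := ⟨_, (Nat.succ_pred_eq_of_pos hV).symm⟩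
  have hfiber : ∀ a ∈ L,
      #{v ∈ univ.filter (· ≠ (0 : V)) | f v = a} ≤ Fintype.card F ^ k - 1 := by
    intro a ha
    set U := Submodule.span F {v | v ≠ 0 ∧ f v = a}
    have hsub : {v ∈ univ.filter (· ≠ (0 : V)) | f v = a} ⊆ (U : Set V).toFinset.erase 0 := by
      intro v hv
      simp only [mem_filter, mem_univ, true_and] at hv
      simpa [hv.1] using (Submodule.subset_span ⟨hv.1, hv.2⟩ : v ∈ U)
    have hU := natCard_submodule_le_of_ne_top (hproper a ha)
    rw [hk, Nat.add_sub_cancel] at hU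
    calc _ ≤ #((U : Set V).toFinset.erase 0) := card_le_card hsub
      _ = Nat.card U - 1 := by
          rw [card_erase_of_mem (by simp), ← Set.ncard_eq_toFinset_card', ← Nat.card_coe_set_eq]
          rfl
      _ ≤ Fintype.card F ^ k - 1 := Nat.sub_le_sub_right hU 1
  have hcount := card_le_mul_card_image_of_maps_to (fun v hv => hf v (by simpa using hv)) _ hfiber
  rw [filter_ne' univ 0, card_erase_of_mem (mem_univ _), card_univ, card_eq_pow_finrank (K := F),
    hk, pow_succ] at hcount
  have hq : 2 ≤ Fintype.card F := Fintype.one_lt_card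
  have hqk : 1 ≤ Fintype.card F ^ k := Nat.one_le_pow _ _ (by omega)
  have hLq := Nat.mul_le_mul_left (Fintype.card F ^ k - 1) (Nat.le_sub_one_of_lt hL)
  zify [hqk, (by omega : 1 ≤ Fintype.card F), Nat.one_le_iff_ne_zero.mpr
    (by positivity : Fintype.card F ^ k * Fintype.card F ≠ 0)] at hcount hLq
  nlinarith

end Counting

theorem ncard_affSpace {r m : ℕ} (s₀ : Fin r → F) {s : Fin m → Fin r → F}
    (hs : LinearIndependent F s) : (affSpace s₀ s).ncard = Fintype.card F ^ m := by
  have hrange : affSpace s₀ s = Set.range (fun β => s₀ + Fintype.linearCombination F s β) := by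
    ext t
    simp only [affSpace, Set.mem_ofPred_eq, Set.mem_range, Fintype.linearCombination_apply,
      eq_comm]
  have hinj : Function.Injective (fun β => s₀ + Fintype.linearCombination F s β) :=
    (add_right_injective s₀).comp hs.fintypeLinearCombination_injective
  rw [hrange, Set.ncard_range_of_injective hinj]
  simp

theorem ncard_affLine {r : ℕ} (z : Fin r → F) {v : Fin r → F} (hv : v ≠ 0) :
    (affLine z v).ncard = Fintype.card F := by
  have hrange : affLine z v = Set.range (fun a : F => z + a • v) := by
    ext t
    simp only [affLine, Set.mem_ofPred_eq, Set.mem_range, eq_comm]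
  have hinj : Function.Injective (fun a : F => z + a • v) :=
    (add_right_injective z).comp (smul_left_injective F hv)
  rw [hrange, Set.ncard_range_of_injective hinj, Nat.card_eq_fintype_card]

/-- The lines of `S` through `z` partition `S \ {z}`. -/
theorem mul_ncard_affSpace_inter_le {r m : ℕ} {B : Set (Fin r → F)} {s₀ z : Fin r → F}
    {s : Fin m → Fin r → F} (hs : LinearIndependent F s) (hz : z ∈ affSpace s₀ s) (hzB : z ∉ B)
    (c : ℝ) (hc : ∀ v : Fin r → F, v ≠ 0 → ((affLine z v ∩ B).ncard : ℝ) ≤ c) :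
    ((Fintype.card F : ℝ) - 1) * (affSpace s₀ s ∩ B).ncard ≤
      ((Fintype.card F : ℝ) ^ m - 1) * c := by
  classical
  set φ := Fintype.linearCombination F s
  let G : Finset (Fin m → F) := {γ | γ ≠ 0 ∧ z + φ γ ∈ B}
  have hSB : (affSpace s₀ s ∩ B).ncard ≤ #G := by
    have hsub : affSpace s₀ s ∩ B ⊆ (fun γ => z + φ γ) '' G := by
      rintro t ⟨ht, htB⟩
      obtain ⟨γ, rfl⟩ := (mem_affSpace_iff_of_mem hz).mp ht
      refine ⟨γ, ?_, rfl⟩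
      simp only [G, coe_filter, mem_univ, true_and, Set.mem_ofPred_eq]
      refine ⟨fun h => hzB ?_, htB⟩
      simpa [h] using htB
    calc (affSpace s₀ s ∩ B).ncard ≤ ((fun γ => z + φ γ) '' G).ncard := Set.ncard_le_ncard hsub
      _ ≤ (G : Set (Fin m → F)).ncard := Set.ncard_image_le
      _ = #G := Set.ncard_coe_finset G
  have hline : ∀ η, η ≠ 0 → (#{a : F | a • η ∈ G} : ℝ) ≤ c := by
    intro η hη
    have hφη : φ η ≠ 0 := (hs.fintypeLinearCombination_injective.ne_iff' φ.map_zero).mpr hη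
    have hinj : Function.Injective (fun a : F => z + a • φ η) :=
      (add_right_injective z).comp (smul_left_injective F hφη)
    have hcount : #{a : F | a • η ∈ G} ≤ (affLine z (φ η) ∩ B).ncard := by
      rw [← Set.ncard_coe_finset, ← Set.ncard_image_of_injective _ hinj]
      refine Set.ncard_le_ncard ?_
      rintro t ⟨a, ha, rfl⟩
      simp only [G, coe_filter, mem_filter, mem_univ, true_and, Set.mem_ofPred_eq,
        map_smul] at ha
      exact ⟨⟨a, rfl⟩, ha.2⟩
    exact (Nat.cast_le.mpr hcount).trans (hc _ hφη)
  have hdouble := card_mul_card_le_of_card_smul_mem_le G (by simp [G]) c hline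
  simp only [Fintype.card_pi, prod_const, card_univ, Fintype.card_fin, Nat.cast_pow] at hdouble
  have hq : (1 : ℝ) ≤ Fintype.card F := Nat.one_le_cast.mpr Fintype.card_pos
  calc ((Fintype.card F : ℝ) - 1) * (affSpace s₀ s ∩ B).ncard
      ≤ ((Fintype.card F : ℝ) - 1) * #G := by gcongr
      _ ≤ ((Fintype.card F : ℝ) ^ m - 1) * c := hdouble

theorem affSpace_subset_of_forall_affLine {r m : ℕ} {B : Set (Fin r → F)} {τ : ℝ} (hτ : 0 ≤ τ)
    (hB : ∀ z v : Fin r → F, v ≠ 0 →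
      τ < ((affLine z v ∩ B).ncard : ℝ) / (Fintype.card F : ℝ) → z ∈ B)
    (s₀ : Fin r → F) {s : Fin m → Fin r → F} (hs : LinearIndependent F s)
    (hdens : τ * (Fintype.card F : ℝ) / ((Fintype.card F : ℝ) - 1) <
      ((affSpace s₀ s ∩ B).ncard : ℝ) / ((affSpace s₀ s).ncard : ℝ)) :
    affSpace s₀ s ⊆ B := by
  intro z hz
  by_contra hzB
  have hq : (1 : ℝ) < Fintype.card F := Nat.one_lt_cast.mpr Fintype.one_lt_card
  have hline : ∀ v : Fin r → F, v ≠ 0 →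
      ((affLine z v ∩ B).ncard : ℝ) ≤ τ * Fintype.card F := fun v hv =>
    (div_le_iff₀ (by linarith)).mp (not_lt.mp fun h => hzB (hB z v hv h))
  have hcount := mul_ncard_affSpace_inter_le hs hz hzB _ hline
  rw [ncard_affSpace s₀ hs, div_lt_div_iff₀ (by linarith) (by positivity)] at hdens
  push_cast at hdens
  nlinarith [mul_nonneg hτ (by linarith : (0 : ℝ) ≤ Fintype.card F)]

section Syndromes

variable [DecidableEq F] {r n : ℕ}

/-- The `(1, E, E, τ)`-line correlated-agreement property of `ker H`. -/
def HasLineCorrelatedAgreement (H : Matrix (Fin r) (Fin n) F) (E : ℕ) (τ : ℝ) : Prop :=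
  ∀ s₀ s₁ : Fin r → F, s₁ ≠ 0 →
    τ < ((affLine s₀ s₁ ∩ syndromeBall H E).ncard : ℝ) / (Fintype.card F : ℝ) →
    ∃ x₀ x₁ : Fin n → F, H *ᵥ x₀ = s₀ ∧ H *ᵥ x₁ = s₁ ∧ {i | x₀ i ≠ 0 ∨ x₁ i ≠ 0}.ncard ≤ E

namespace HasLineCorrelatedAgreement

variable {H : Matrix (Fin r) (Fin n) F} {E : ℕ} {τ : ℝ}

theorem mem_syndromeBall (hline : HasLineCorrelatedAgreement H E τ) {z v : Fin r → F}
    (hv : v ≠ 0)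
    (hτ : τ < ((affLine z v ∩ syndromeBall H E).ncard : ℝ) / (Fintype.card F : ℝ)) :
    z ∈ syndromeBall H E := by
  obtain ⟨x₀, x₁, hx₀, -, hw⟩ := hline z v hv hτ
  exact ⟨x₀, (hammingNorm_le_ncard_ne_zero_or x₀ x₁).trans hw, hx₀⟩

theorem affSpace_subset_syndromeBall (hline : HasLineCorrelatedAgreement H E τ) (hτ : 0 ≤ τ)
    {m : ℕ} (s₀ : Fin r → F) {s : Fin m → Fin r → F} (hs : LinearIndependent F s)
    (hdens : τ * (Fintype.card F : ℝ) / ((Fintype.card F : ℝ) - 1) <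
      ((affSpace s₀ s ∩ syndromeBall H E).ncard : ℝ) / ((affSpace s₀ s).ncard : ℝ)) :
    affSpace s₀ s ⊆ syndromeBall H E :=
  affSpace_subset_of_forall_affLine hτ (fun _ _ hv => hline.mem_syndromeBall hv) s₀ hs hdens

theorem exists_support_subset (hline : HasLineCorrelatedAgreement H E τ) (hτ : τ < 1)
    {p v : Fin r → F} (hv : v ≠ 0) (hsub : affLine p v ⊆ syndromeBall H E)
    (hp : ∀ x, H *ᵥ x = p → E ≤ hammingNorm x) :
    ∃ a b : Fin n → F,
      H *ᵥ a = p ∧ H *ᵥ b = v ∧ hammingNorm a ≤ E ∧ ∀ i, a i = 0 → b i = 0 := by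
  have hfull : τ < ((affLine p v ∩ syndromeBall H E).ncard : ℝ) / (Fintype.card F : ℝ) := by
    rw [Set.inter_eq_self_of_subset_left hsub, ncard_affLine p hv,
      div_self (Nat.cast_ne_zero.mpr Fintype.card_ne_zero)]
    exact hτ
  obtain ⟨a, b, ha, hb, hw⟩ := hline p v hv hfull
  exact ⟨a, b, ha, hb, (hammingNorm_le_ncard_ne_zero_or a b).trans hw,
    fun i => eq_zero_of_ncard_ne_zero_or_le (hw.trans (hp a ha))⟩

end HasLineCorrelatedAgreement

theorem ncard_sparse_preimage_lt {H : Matrix (Fin r) (Fin n) F} {E : ℕ}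
    (hlist : ∀ x : Fin n → F,
      {c : Fin n → F | H *ᵥ c = 0 ∧ hammingDist x c ≤ E}.ncard < Fintype.card F)
    (p : Fin r → F) :
    {x : Fin n → F | H *ᵥ x = p ∧ hammingNorm x ≤ E}.ncard < Fintype.card F := by
  rcases Set.eq_empty_or_nonempty {x : Fin n → F | H *ᵥ x = p ∧ hammingNorm x ≤ E}
    with h | ⟨a, ha⟩
  · rw [h, Set.ncard_empty]
    exact Fintype.card_pos
  refine lt_of_le_of_lt ?_ (hlist a)
  refine Set.ncard_le_ncard_of_injOn (a - ·) ?_ sub_right_injective.injOn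
  rintro x ⟨hx, hwx⟩
  refine ⟨by rw [mulVec_sub, ha.1, hx, sub_self], ?_⟩
  rwa [hammingDist_comm, hammingDist_eq_hammingNorm, neg_sub, sub_add_cancel]

theorem exists_minimal_radius {H : Matrix (Fin r) (Fin n) F} {E : ℕ} {S : Set (Fin r → F)}
    (hS : S.Nonempty) (hsub : S ⊆ syndromeBall H E) :
    ∃ E' ≤ E, S ⊆ syndromeBall H E' ∧ ∃ p ∈ S, ∀ x, H *ᵥ x = p → E' ≤ hammingNorm x := by
  classical
  have hex : ∃ E', S ⊆ syndromeBall H E' := ⟨E, hsub⟩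
  refine ⟨Nat.find hex, Nat.find_min' hex hsub, Nat.find_spec hex, ?_⟩
  by_contra! hlow
  obtain ⟨p, hp⟩ := hS
  obtain ⟨x, -, hx⟩ := hlow p hp
  refine Nat.find_min hex (Nat.sub_one_lt_of_lt ((Nat.zero_le _).trans_lt hx)) fun t ht => ?_
  obtain ⟨y, hy, hyw⟩ := hlow t ht
  exact ⟨y, Nat.le_sub_one_of_lt hyw, hy⟩

theorem HasLineCorrelatedAgreement.exists_lift {m : ℕ} {H : Matrix (Fin r) (Fin n) F} {E : ℕ}
    {τ : ℝ} (hline : HasLineCorrelatedAgreement H E τ) (hτ : τ < 1)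
    (hlist : ∀ x : Fin n → F,
      {c : Fin n → F | H *ᵥ c = 0 ∧ hammingDist x c ≤ E}.ncard < Fintype.card F)
    (hm : 0 < m) {s₀ p : Fin r → F} {s : Fin m → Fin r → F} (hs : LinearIndependent F s)
    (hsub : affSpace s₀ s ⊆ syndromeBall H E) (hp : p ∈ affSpace s₀ s)
    (hpw : ∀ x, H *ᵥ x = p → E ≤ hammingNorm x) :
    ∃ x : Fin (m + 1) → Fin n → F, H *ᵥ x 0 = s₀ ∧ (∀ i, H *ᵥ x i.succ = s i) ∧
      {i | ∃ j, x j i ≠ 0}.ncard ≤ E := by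
  classical
  set φ := Fintype.linearCombination F s
  have hpair : ∀ γ, ∃ ab : (Fin n → F) × (Fin n → F), γ ≠ 0 →
      H *ᵥ ab.1 = p ∧ H *ᵥ ab.2 = φ γ ∧ hammingNorm ab.1 ≤ E ∧
        ∀ i, ab.1 i = 0 → ab.2 i = 0 := by
    intro γ
    by_cases hγ : γ = 0
    · exact ⟨0, fun h => absurd hγ h⟩
    have hφγ : φ γ ≠ 0 := (hs.fintypeLinearCombination_injective.ne_iff' φ.map_zero).mpr hγ
    have hlinesub : affLine p (φ γ) ⊆ syndromeBall H E := by
      rintro t ⟨c, rfl⟩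
      exact hsub ((mem_affSpace_iff_of_mem hp).mpr ⟨c • γ, by rw [map_smul]⟩)
    obtain ⟨a, b, h⟩ := hline.exists_support_subset hτ hφγ hlinesub hpw
    exact ⟨(a, b), fun _ => h⟩
  choose ab hab using hpair
  let L : Finset (Fin n → F) := {x | H *ᵥ x = p ∧ hammingNorm x ≤ E}
  have hL : #L < Fintype.card F := by
    simpa [L, ← Set.ncard_coe_finset] using ncard_sparse_preimage_lt hlist p
  obtain ⟨a, haL, hspan⟩ := exists_span_fiber_eq_top (by simpa using hm) (fun γ => (ab γ).1) L hL
    fun γ hγ => by simp [L, (hab γ hγ).1, (hab γ hγ).2.2.1]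
  simp only [L, mem_filter, mem_univ, true_and] at haL
  refine exists_lift_of_forall_supported hp haL.1 haL.2 fun γ =>
    exists_supported_preimage_of_mem_span (K := {γ | γ ≠ 0 ∧ (ab γ).1 = a}) ?_
      (hspan ▸ Submodule.mem_top)
  rintro γ ⟨hγ, rfl⟩
  obtain ⟨-, hb, -, hsupp⟩ := hab γ hγ
  exact ⟨(ab γ).2, hsupp, hb⟩

end Syndromes

theorem stmt_2_general {F : Type} [Field F] [Fintype F] [DecidableEq F] {r n : ℕ}
    (H : Matrix (Fin r) (Fin n) F) (E : ℕ)
    (τ : ℝ) (hτ0 : 0 ≤ τ)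
    (hline : ∀ E' : ℕ, E' ≤ E → ∀ s₀ s₁ : Fin r → F, s₁ ≠ 0 →
      τ < ((affLine s₀ s₁ ∩ syndromeBall H E').ncard : ℝ) / (Fintype.card F : ℝ) →
      ∃ x₀ x₁ : Fin n → F, H.mulVec x₀ = s₀ ∧ H.mulVec x₁ = s₁ ∧
        ({i : Fin n | x₀ i ≠ 0 ∨ x₁ i ≠ 0}).ncard ≤ E')
    (hlist : ∀ x : Fin n → F,
      ({c : Fin n → F | H.mulVec c = 0 ∧ hammingDist x c ≤ E}).ncard < Fintype.card F) :
    ∀ m : ℕ, 2 ≤ m → ∀ (s₀ : Fin r → F) (s : Fin m → Fin r → F), LinearIndependent F s →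
      τ * (Fintype.card F : ℝ) / ((Fintype.card F : ℝ) - 1) <
        ((affSpace s₀ s ∩ syndromeBall H E).ncard : ℝ) / ((affSpace s₀ s).ncard : ℝ) →
      ∃ x : Fin (m + 1) → Fin n → F,
        H.mulVec (x 0) = s₀ ∧ (∀ i : Fin m, H.mulVec (x i.succ) = s i) ∧
        ({i : Fin n | ∃ j, x j i ≠ 0}).ncard ≤ E := by
  intro m hm s₀ s hs hdens
  have hsub :=
    HasLineCorrelatedAgreement.affSpace_subset_syndromeBall (hline E le_rfl) hτ0 s₀ hs hdens
  have hτ : τ < 1 := by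
    have hq : (1 : ℝ) < Fintype.card F := Nat.one_lt_cast.mpr Fintype.one_lt_card
    have hle : ((affSpace s₀ s ∩ syndromeBall H E).ncard : ℝ) / (affSpace s₀ s).ncard ≤ 1 :=
      div_le_one_of_le₀ (by exact_mod_cast Set.ncard_le_ncard Set.inter_subset_left) (by positivity)
    have := (div_lt_one (by linarith)).mp (hdens.trans_le hle)
    nlinarith
  obtain ⟨E', hE', hsub', p, hp, hpw⟩ :=
    exists_minimal_radius (S := affSpace s₀ s) ⟨s₀, 0, by simp⟩ hsub
  have hlist' : ∀ x : Fin n → F,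
      {c : Fin n → F | H *ᵥ c = 0 ∧ hammingDist x c ≤ E'}.ncard < Fintype.card F := fun x =>
    (Set.ncard_le_ncard fun _ hc => And.imp_right (·.trans hE') hc).trans_lt (hlist x)
  obtain ⟨x, hx₀, hx, hxE'⟩ :=
    HasLineCorrelatedAgreement.exists_lift (hline E' hE') hτ hlist' (by omega) hs hsub' hp hpw
  exact ⟨x, hx₀, hx, hxE'.trans hE'⟩

/-- Line correlated agreement (at all radii up to `E`), together with a list-size bound,
implies `m`-space correlated agreement with threshold `τ·q/(q−1)`. -/
theorem stmt_2 {F : Type} [Field F] [Fintype F] [DecidableEq F] {r n : ℕ}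
    (H : Matrix (Fin r) (Fin n) F) (E : ℕ) (hEn : E ≤ n)
    (τ : ℝ) (hτ0 : 0 ≤ τ) (hτ1 : τ ≤ 1)
    (hline : ∀ E' : ℕ, E' ≤ E → ∀ s₀ s₁ : Fin r → F, s₁ ≠ 0 →
      τ < ((affLine s₀ s₁ ∩ syndromeBall H E').ncard : ℝ) / (Fintype.card F : ℝ) →
      ∃ x₀ x₁ : Fin n → F, H.mulVec x₀ = s₀ ∧ H.mulVec x₁ = s₁ ∧
        ({i : Fin n | x₀ i ≠ 0 ∨ x₁ i ≠ 0}).ncard ≤ E')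
    (hlist : ∀ x : Fin n → F,
      ({c : Fin n → F | H.mulVec c = 0 ∧ hammingDist x c ≤ E}).ncard < Fintype.card F) :
    ∀ m : ℕ, 2 ≤ m → ∀ (s₀ : Fin r → F) (s : Fin m → Fin r → F), LinearIndependent F s →
      τ * (Fintype.card F : ℝ) / ((Fintype.card F : ℝ) - 1) <
        ((affSpace s₀ s ∩ syndromeBall H E).ncard : ℝ) / ((affSpace s₀ s).ncard : ℝ) →
      ∃ x : Fin (m + 1) → Fin n → F,
        H.mulVec (x 0) = s₀ ∧ (∀ i : Fin m, H.mulVec (x i.succ) = s i) ∧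
        ({i : Fin n | ∃ j, x j i ≠ 0}).ncard ≤ E :=
  stmt_2_general H E τ hτ0 hline hlist
end

section
/- Let q be a prime power and let E, K, n be integers with 1 ≤ K ≤ E + 1 < n and K < q. Fix pairwise distinct elements α₁,…,α_K ∈ 𝔽_q. Then there exist vectors x₁, x₂ ∈ 𝔽_q^n such that wt(x₁ + α_j x₂) = E for every j ∈ [K], and wt(x₁ + α x₂) = E + 1 for every α ∈ 𝔽_q \ {α₁,…,α_K}. Moreover, for every matrix H ∈ 𝔽_q^{r×n} such that the code C = ker(H) has minimum distance d(C) ≥ 2E + 2, the affine syndrome line L := {Hx₁ + α·Hx₂ : α ∈ 𝔽_q} ⊆ 𝔽_q^r satisfies |L ∩ H_E| ≥ K and L ⊄ H_E. -/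
/-
Put the prescribed values on the first `K` coordinates: with
`x₁ = (-α₁, …, -α_K, 1, …, 1, 0, …, 0)` (`E + 1` leading entries) and `x₂` the indicator of the
first `K` coordinates, `x₁ + a x₂ = (a - α₁, …, a - α_K, 1, …, 1, 0, …, 0)` has weight `E + 1`
minus the number of `j` with `α_j = a`.

Since `d(C) ≥ 2E + 2`, two words whose weights sum to less than `2E + 2` and which have the same
syndrome are equal. Hence the `K` syndromes `H(x₁ + α_j x₂)` are distinct points of `H_E`, while
for `a ∉ {α_j}` (which exists as `K < q`) the syndrome of the weight-`(E + 1)` word `x₁ + a x₂`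
is not the syndrome of any word of weight at most `E`.
-/

open Finset Matrix

section Construction

variable {F : Type*} [Ring F] {K E n : ℕ}

def noSlackBase (E : ℕ) (α : Fin K → F) : Fin n → F :=
  fun i => if h : (i : ℕ) < K then -α ⟨i, h⟩ else if (i : ℕ) ≤ E then 1 else 0

def noSlackDir (K n : ℕ) : Fin n → F :=
  fun i => if (i : ℕ) < K then 1 else 0

theorem noSlackBase_add_smul_noSlackDir_apply (α : Fin K → F) (a : F) (i : Fin n) :
    (noSlackBase E α + a • noSlackDir K n : Fin n → F) i =
      if h : (i : ℕ) < K then a - α ⟨i, h⟩ else if (i : ℕ) ≤ E then 1 else 0 := by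
  by_cases h : (i : ℕ) < K
  · simp [noSlackBase, noSlackDir, h, neg_add_eq_sub]
  · simp [noSlackBase, noSlackDir, h]

variable [Nontrivial F] [DecidableEq F]

theorem support_noSlackBase_add_smul_noSlackDir (hKE : K ≤ E + 1) (hEn : E < n)
    (α : Fin K → F) (a : F) :
    ({i | (noSlackBase E α + a • noSlackDir K n : Fin n → F) i ≠ 0} : Finset (Fin n)) =
      Iic ⟨E, hEn⟩ \ ({j | α j = a} : Finset (Fin K)).map (Fin.castLEEmb (hKE.trans hEn)) := by
  ext i
  simp only [mem_filter, mem_univ, true_and, mem_sdiff, mem_Iic, mem_map, Fin.castLEEmb_apply,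
    noSlackBase_add_smul_noSlackDir_apply, Fin.le_def]
  split_ifs with hiK hiE
  · have hcast : ∀ j : Fin K, Fin.castLE (hKE.trans hEn) j = i ↔ j = ⟨i, hiK⟩ := by
      simp [Fin.ext_iff]
    simp only [hcast, sub_ne_zero, exists_eq_right]
    grind
  · simp only [ne_eq, one_ne_zero, not_false_eq_true, hiE, true_and, true_iff, not_exists,
      not_and]
    rintro j - rfl
    exact hiK j.2
  · simp [hiE]

theorem hammingNorm_noSlackBase_add_smul_noSlackDir (hKE : K ≤ E + 1) (hEn : E < n)
    (α : Fin K → F) (a : F) :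
    hammingNorm (noSlackBase E α + a • noSlackDir K n : Fin n → F) = E + 1 - #{j | α j = a} := by
  rw [hammingNorm, support_noSlackBase_add_smul_noSlackDir hKE hEn, card_sdiff_of_subset,
    card_map, Fin.card_Iic]
  intro i hi
  obtain ⟨j, -, rfl⟩ := mem_map.mp hi
  simpa [Fin.le_def] using Nat.le_of_lt_succ (j.2.trans_le hKE)

theorem hammingNorm_noSlackBase_add_smul_noSlackDir_of_mem (hKE : K ≤ E + 1) (hEn : E < n)
    {α : Fin K → F} (hα : Function.Injective α) (j : Fin K) :
    hammingNorm (noSlackBase E α + α j • noSlackDir K n : Fin n → F) = E := by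
  simp [hammingNorm_noSlackBase_add_smul_noSlackDir hKE hEn, hα.eq_iff, filter_eq']

theorem hammingNorm_noSlackBase_add_smul_noSlackDir_of_notMem (hKE : K ≤ E + 1) (hEn : E < n)
    {α : Fin K → F} {a : F} (ha : ∀ j, a ≠ α j) :
    hammingNorm (noSlackBase E α + a • noSlackDir K n : Fin n → F) = E + 1 := by
  simp [hammingNorm_noSlackBase_add_smul_noSlackDir hKE hEn, Ne.symm, ha]

end Construction

section Decoding

theorem hammingNorm_sub_le {ι : Type*} [Fintype ι] {β : ι → Type*} [∀ i, AddGroup (β i)]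
    [∀ i, DecidableEq (β i)] (x y : ∀ i, β i) :
    hammingNorm (x - y) ≤ hammingNorm x + hammingNorm y := by
  have hdist : hammingNorm (x - y) = hammingDist x y := by
    simp only [hammingNorm, hammingDist, Pi.sub_apply, ne_eq, sub_eq_zero]
  rw [hdist, ← hammingDist_zero_right x, ← hammingDist_zero_right y, hammingDist_comm y]
  exact hammingDist_triangle x 0 y

variable {R : Type*} [Ring R] [DecidableEq R] {m ι : Type*} [Fintype ι]

theorem Matrix.eq_of_mulVec_eq_of_hammingNorm_add_lt {H : Matrix m ι R} {d : ℕ}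
    (hd : ∀ c, H *ᵥ c = 0 → c ≠ 0 → d ≤ hammingNorm c) {x y : ι → R}
    (hxy : hammingNorm x + hammingNorm y < d) (hH : H *ᵥ x = H *ᵥ y) : x = y := by
  by_contra hne
  have hcode : d ≤ hammingNorm (x - y) :=
    hd _ (by rw [mulVec_sub, hH, sub_self]) (sub_ne_zero.mpr hne)
  have := hammingNorm_sub_le x y
  omega

end Decoding

theorem Matrix.mulVec_add_smul_mem_range {R : Type*} [CommSemiring R] {m ι : Type*} [Fintype ι]
    (H : Matrix m ι R) (x₁ x₂ : ι → R) (a : R) :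
    H *ᵥ (x₁ + a • x₂) ∈ {t | ∃ b : R, t = H *ᵥ x₁ + b • H *ᵥ x₂} :=
  ⟨a, by rw [mulVec_add, mulVec_smul]⟩

section SyndromeLine

variable {F : Type} [Field F] [Fintype F] [DecidableEq F] {r n E : ℕ}
  {H : Matrix (Fin r) (Fin n) F}

theorem mulVec_notMem_syndromeBall (hd : ∀ c, H *ᵥ c = 0 → c ≠ 0 → 2 * E + 2 ≤ hammingNorm c)
    {x : Fin n → F} (hx : hammingNorm x = E + 1) : H *ᵥ x ∉ syndromeBall H E := by
  rintro ⟨y, hy, hHy⟩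
  have hxy := eq_of_mulVec_eq_of_hammingNorm_add_lt hd (by omega) hHy
  subst hxy
  omega

variable {K : ℕ} {α : Fin K → F} {x₁ x₂ : Fin n → F}

theorem le_ncard_syndromeLine_inter_syndromeBall
    (hd : ∀ c, H *ᵥ c = 0 → c ≠ 0 → 2 * E + 2 ≤ hammingNorm c) (hα : Function.Injective α)
    (hE : ∀ j, hammingNorm (x₁ + α j • x₂) = E) {a : F} (ha : hammingNorm (x₁ + a • x₂) = E + 1) :
    K ≤ ({t | ∃ b : F, t = H *ᵥ x₁ + b • H *ᵥ x₂} ∩ syndromeBall H E).ncard := by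
  have hinj : Function.Injective fun j => H *ᵥ (x₁ + α j • x₂) := by
    intro j k hjk
    have hx₂ : x₂ ≠ 0 := by
      rintro rfl
      have hEj := hE j
      simp only [smul_zero, add_zero] at ha hEj
      omega
    have hword := eq_of_mulVec_eq_of_hammingNorm_add_lt hd (by rw [hE, hE]; omega) hjk
    exact hα (smul_left_injective F hx₂ (add_left_cancel hword))
  calc K = (Set.range fun j => H *ᵥ (x₁ + α j • x₂)).ncard := by
        rw [Set.ncard_range_of_injective hinj, Nat.card_eq_fintype_card, Fintype.card_fin]
    _ ≤ _ := by
      refine Set.ncard_le_ncard ?_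
      rintro _ ⟨j, rfl⟩
      exact ⟨mulVec_add_smul_mem_range H x₁ x₂ (α j), _, (hE j).le, rfl⟩

theorem syndromeLine_not_subset_syndromeBall
    (hd : ∀ c, H *ᵥ c = 0 → c ≠ 0 → 2 * E + 2 ≤ hammingNorm c) {a : F}
    (ha : hammingNorm (x₁ + a • x₂) = E + 1) :
    ¬ {t | ∃ b : F, t = H *ᵥ x₁ + b • H *ᵥ x₂} ⊆ syndromeBall H E := fun hsub =>
  mulVec_notMem_syndromeBall hd ha (hsub (mulVec_add_smul_mem_range H x₁ x₂ a))

end SyndromeLine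

theorem exists_forall_ne_of_card_lt {ι F : Type*} [Fintype ι] [Fintype F] (α : ι → F)
    (hcard : Fintype.card ι < Fintype.card F) : ∃ a, ∀ i, a ≠ α i := by
  by_contra! hcover
  exact (Fintype.card_le_of_surjective α fun a => (hcover a).imp fun _ h => h.symm).not_gt hcard

theorem stmt_5_general {F : Type} [Field F] [Fintype F] [DecidableEq F]
    (n E K : ℕ) (hKE : K ≤ E + 1) (hEn : E + 1 < n)
    (hKq : K < Fintype.card F) (α : Fin K → F) (hα : Function.Injective α) :
    ∃ x₁ x₂ : Fin n → F,
      (∀ j : Fin K, hammingNorm (x₁ + α j • x₂) = E) ∧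
      (∀ a : F, (∀ j : Fin K, a ≠ α j) → hammingNorm (x₁ + a • x₂) = E + 1) ∧
      (∀ (r : ℕ) (H : Matrix (Fin r) (Fin n) F),
        (∀ c : Fin n → F, H.mulVec c = 0 → c ≠ 0 → 2 * E + 2 ≤ hammingNorm c) →
        K ≤ ({t : Fin r → F | ∃ a : F, t = H.mulVec x₁ + a • H.mulVec x₂} ∩
              syndromeBall H E).ncard ∧
        ¬ {t : Fin r → F | ∃ a : F, t = H.mulVec x₁ + a • H.mulVec x₂} ⊆
              syndromeBall H E) := by
  have hEn' : E < n := by omega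
  have hE := hammingNorm_noSlackBase_add_smul_noSlackDir_of_mem hKE hEn' hα
  have hE1 : ∀ a, (∀ j, a ≠ α j) → _ := fun a ha =>
    hammingNorm_noSlackBase_add_smul_noSlackDir_of_notMem (n := n) hKE hEn' ha
  obtain ⟨a, ha⟩ := exists_forall_ne_of_card_lt α (by simpa using hKq)
  exact ⟨noSlackBase E α, noSlackDir K n, hE, hE1, fun r H hd =>
    ⟨le_ncard_syndromeLine_inter_syndromeBall hd hα hE (hE1 a ha),
      syndromeLine_not_subset_syndromeBall hd (hE1 a ha)⟩⟩

/-- No-slack obstruction: there are `x₁, x₂` whose line takes weight exactly `E` at the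
chosen `K` points and weight `E+1` elsewhere; for any parity-check matrix whose kernel
has minimum distance at least `2E+2`, the induced syndrome line has at least `K` points
in `H_E` but is not contained in `H_E`. -/
theorem stmt_5 {F : Type} [Field F] [Fintype F] [DecidableEq F]
    (n E K : ℕ) (hK1 : 1 ≤ K) (hKE : K ≤ E + 1) (hEn : E + 1 < n)
    (hKq : K < Fintype.card F) (α : Fin K → F) (hα : Function.Injective α) :
    ∃ x₁ x₂ : Fin n → F,
      (∀ j : Fin K, hammingNorm (x₁ + α j • x₂) = E) ∧
      (∀ a : F, (∀ j : Fin K, a ≠ α j) → hammingNorm (x₁ + a • x₂) = E + 1) ∧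
      (∀ (r : ℕ) (H : Matrix (Fin r) (Fin n) F),
        (∀ c : Fin n → F, H.mulVec c = 0 → c ≠ 0 → 2 * E + 2 ≤ hammingNorm c) →
        K ≤ ({t : Fin r → F | ∃ a : F, t = H.mulVec x₁ + a • H.mulVec x₂} ∩
              syndromeBall H E).ncard ∧
        ¬ {t : Fin r → F | ∃ a : F, t = H.mulVec x₁ + a • H.mulVec x₂} ⊆
              syndromeBall H E) :=
  stmt_5_general n E K hKE hEn hKq α hα
end

section
/- Let q be a prime power, H ∈ 𝔽_q^{r×n}, and let C = ker(H) be a linear code with minimum distance d(C) ≥ d, where 0 < E < d, and set γ := (d − E)/d ∈ (0,1). Let s₀, s₁ ∈ 𝔽_q^r with dim_{𝔽_q} span{s₀,s₁} = 2 and L = {s₀ + α s₁ : α ∈ 𝔽_q}. Suppose X = [x₁|⋯|x_K] ∈ 𝔽_q^{n×K} is an E-witness matrix covering K elements of L, i.e., there exist pairwise distinct α₁,…,α_K ∈ 𝔽_q with Hx_j = s₀ + α_j s₁ and wt(x_j) ≤ E for all j ∈ [K], and suppose rank(X) = t ≥ 3. Then there exists a subset J ⊆ [K] with |J| ≥ Kγ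 such that the submatrix X_J = [x_j]_{j∈J} is still an E-witness matrix covering |J| elements of L (with the corresponding α_j, j ∈ J) and rank(X_J) ≤ t − 1. -/
/-!
`H` maps the column span `V` of `X` into the plane `span {s₀, s₁}`, so when `rank X ≥ 3` it kills
a nonzero `w ∈ V`, a codeword of weight at least `d`. The columns have total weight at most `K E`,
so on the support of `w` some coordinate `i` is nonzero in at most `K E / d` columns. Keep the
columns vanishing at `i`: they span a subspace of `V ∩ {v | v i = 0}`, which misses `w`.
-/

open Finset Module Submodule Matrix

section HammingCount

variable {ι κ β : Type*} [Fintype ι] [Fintype κ] [Zero β] [DecidableEq β]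

theorem sum_card_filter_apply_ne_zero (x : ι → κ → β) :
    ∑ i, #{j | x j i ≠ 0} = ∑ j, hammingNorm (x j) := by
  simp only [hammingNorm, card_filter]
  exact sum_comm

theorem exists_apply_ne_zero_hammingNorm_mul_card_le (x : ι → κ → β) {w : κ → β} (hw : w ≠ 0) :
    ∃ i, w i ≠ 0 ∧ hammingNorm w * #{j | x j i ≠ 0} ≤ ∑ j, hammingNorm (x j) := by
  set S : Finset κ := {i | w i ≠ 0}
  have hS : S.Nonempty := by
    obtain ⟨i, hi⟩ := Function.ne_iff.mp hw
    exact ⟨i, mem_filter.mpr ⟨mem_univ _, hi⟩⟩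
  obtain ⟨i, hiS, hmin⟩ := S.exists_min_image (fun i ↦ #{j | x j i ≠ 0}) hS
  refine ⟨i, (mem_filter.mp hiS).2, ?_⟩
  calc hammingNorm w * #{j | x j i ≠ 0} = ∑ _i' ∈ S, #{j | x j i ≠ 0} := by
        rw [sum_const, smul_eq_mul]; rfl
    _ ≤ ∑ i' ∈ S, #{j | x j i' ≠ 0} := sum_le_sum hmin
    _ ≤ ∑ i', #{j | x j i' ≠ 0} := sum_le_sum_of_subset (subset_univ S)
    _ = ∑ j, hammingNorm (x j) := sum_card_filter_apply_ne_zero x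

end HammingCount

section Span

variable {F ι κ : Type*} [Field F] [Fintype κ]

theorem exists_mem_span_ne_zero_mulVec_eq_zero {m : Type*} [Finite m]
    (H : Matrix m κ F) (x : ι → κ → F) (P : Submodule F (m → F)) (hP : ∀ j, H *ᵥ x j ∈ P)
    (hlt : finrank F P < finrank F (span F (Set.range x))) :
    ∃ w ∈ span F (Set.range x), w ≠ 0 ∧ H *ᵥ w = 0 := by
  have hmaps : span F (Set.range x) ≤ P.comap H.mulVecLin :=
    span_le.mpr (by rintro _ ⟨j, rfl⟩; exact hP j)
  obtain ⟨⟨w, hwV⟩, hw, hw0⟩ := exists_mem_ne_zero_of_ne_bot <|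
    LinearMap.ker_ne_bot_of_finrank_lt (f := H.mulVecLin.restrict fun v hv ↦ hmaps hv) hlt
  refine ⟨w, hwV, fun h ↦ hw0 (by simp [h]), ?_⟩
  simpa [LinearMap.restrict_apply, Subtype.ext_iff] using hw

theorem finrank_span_lt_of_apply_eq_zero (x : ι → κ → F) {w : κ → F}
    (hw : w ∈ span F (Set.range x)) {i : κ} (hwi : w i ≠ 0) (J : Set ι)
    (hJ : ∀ j ∈ J, x j i = 0) :
    finrank F (span F (Set.range fun j : J ↦ x j)) < finrank F (span F (Set.range x)) := by
  set W := span F (Set.range x) ⊓ LinearMap.ker (LinearMap.proj (R := F) (φ := fun _ : κ ↦ F) i)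
  have hJW : span F (Set.range fun j : J ↦ x j) ≤ W := by
    rw [span_le]
    rintro v ⟨j, rfl⟩
    exact ⟨subset_span ⟨j, rfl⟩, hJ j j.2⟩
  have hWlt : W < span F (Set.range x) :=
    lt_of_le_of_ne inf_le_left fun hWV ↦ hwi (hWV ▸ hw : w ∈ W).2
  exact (finrank_mono hJW).trans_lt (finrank_lt_finrank_of_lt hWlt)

end Span

theorem mul_sub_div_le_sub_of_mul_le {K N d E : ℝ} (hd : 0 ≤ d) (hNK : N ≤ K)
    (h : d * N ≤ K * E) : K * ((d - E) / d) ≤ K - N := by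
  rcases hd.eq_or_lt with rfl | hd
  · simpa using hNK
  · rw [← mul_div_assoc, div_le_iff₀ hd]
    linarith

theorem stmt_6_general {F : Type} [Field F] [DecidableEq F] {r n : ℕ}
    (H : Matrix (Fin r) (Fin n) F) (d E : ℕ)
    (hdist : ∀ c : Fin n → F, H.mulVec c = 0 → c ≠ 0 → d ≤ hammingNorm c)
    (γ : ℝ) (hγ : γ = ((d : ℝ) - E) / d)
    (s₀ s₁ : Fin r → F)
    (hdim : Module.finrank F (Submodule.span F ({s₀, s₁} : Set (Fin r → F))) = 2)
    (K : ℕ) (α : Fin K → F)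
    (x : Fin K → Fin n → F)
    (hwit : ∀ j : Fin K, H.mulVec (x j) = s₀ + α j • s₁ ∧ hammingNorm (x j) ≤ E)
    (t : ℕ) (ht : 3 ≤ t)
    (hrank : (Matrix.of fun (i : Fin n) (j : Fin K) => x j i).rank = t) :
    ∃ J : Finset (Fin K),
      (K : ℝ) * γ ≤ (J.card : ℝ) ∧
      (Matrix.of fun (i : Fin n) (j : J) => x j i).rank ≤ t - 1 := by
  have hV : finrank F (span F (Set.range x)) = t := by
    rw [← hrank, rank_eq_finrank_span_cols]; rfl
  have hline (j : Fin K) : H *ᵥ x j ∈ span F {s₀, s₁} :=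
    (hwit j).1 ▸ mem_span_pair.mpr ⟨1, α j, by rw [one_smul]⟩
  obtain ⟨w, hwV, hw0, hHw⟩ := exists_mem_span_ne_zero_mulVec_eq_zero H x _ hline (by omega)
  obtain ⟨i, hwi, hi⟩ := exists_apply_ne_zero_hammingNorm_mul_card_le x hw0
  have hdN : d * #{j | x j i ≠ 0} ≤ K * E := calc
    d * #{j | x j i ≠ 0} ≤ hammingNorm w * #{j | x j i ≠ 0} :=
      Nat.mul_le_mul_right _ (hdist w hHw hw0)
    _ ≤ ∑ j, hammingNorm (x j) := hi
    _ ≤ ∑ _j : Fin K, E := sum_le_sum fun j _ ↦ (hwit j).2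
    _ = K * E := by simp
  set J : Finset (Fin K) := {j | x j i = 0}
  refine ⟨J, ?_, ?_⟩
  · have hcard : #J + #{j | x j i ≠ 0} = K := by
      simpa using card_filter_add_card_filter_not (s := univ) fun j ↦ x j i = 0
    have hcardR : (#J : ℝ) + #{j | x j i ≠ 0} = K := by exact_mod_cast hcard
    rw [hγ, eq_sub_of_add_eq hcardR]
    exact mul_sub_div_le_sub_of_mul_le (Nat.cast_nonneg _)
      ((le_add_of_nonneg_left (Nat.cast_nonneg _)).trans_eq hcardR) (by exact_mod_cast hdN)
  · have hlt := finrank_span_lt_of_apply_eq_zero x hwV hwi J fun j hj ↦ (mem_filter.mp hj).2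
    rw [rank_eq_finrank_span_cols]
    exact Nat.le_sub_one_of_lt (hlt.trans_eq hV)

/-- Rank-reduction step for witness matrices of a nondegenerate syndrome line:
from a rank-`t ≥ 3` `E`-witness matrix covering `K` points, one keeps a `γ`-fraction of the
columns and drops the rank by one. -/
theorem stmt_6 {F : Type} [Field F] [Fintype F] [DecidableEq F] {r n : ℕ}
    (H : Matrix (Fin r) (Fin n) F) (d E : ℕ) (hE0 : 0 < E) (hEd : E < d)
    (hdist : ∀ c : Fin n → F, H.mulVec c = 0 → c ≠ 0 → d ≤ hammingNorm c)
    (γ : ℝ) (hγ : γ = ((d : ℝ) - E) / d)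
    (s₀ s₁ : Fin r → F)
    (hdim : Module.finrank F (Submodule.span F ({s₀, s₁} : Set (Fin r → F))) = 2)
    (K : ℕ) (α : Fin K → F) (hα : Function.Injective α)
    (x : Fin K → Fin n → F)
    (hwit : ∀ j : Fin K, H.mulVec (x j) = s₀ + α j • s₁ ∧ hammingNorm (x j) ≤ E)
    (t : ℕ) (ht : 3 ≤ t)
    (hrank : (Matrix.of fun (i : Fin n) (j : Fin K) => x j i).rank = t) :
    ∃ J : Finset (Fin K),
      (K : ℝ) * γ ≤ (J.card : ℝ) ∧
      (Matrix.of fun (i : Fin n) (j : J) => x j i).rank ≤ t - 1 :=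
  stmt_6_general H d E hdist γ hγ s₀ s₁ hdim K α x hwit t ht hrank
end

section
/- Let q be a prime power, H ∈ 𝔽_q^{r×n}, and let C = ker(H) be a linear code with minimum distance d(C) ≥ d, where 0 < E < d, and set γ := (d − E)/d. Let s₀, s₁ ∈ 𝔽_q^r with dim_{𝔽_q} span{s₀,s₁} = 2. Suppose X = [x₁|⋯|x_K] ∈ 𝔽_q^{n×K} satisfies Hx_j = s₀ + α_j s₁ and wt(x_j) ≤ E for pairwise distinct α₁,…,α_K ∈ 𝔽_q, and rank(X) = t ≥ 2. Then there exists a subset J ⊆ [K] with |J| ≥ K·γ^{t−2} and vectors ã, b̃ ∈ 𝔽_q^n with b̃ ≠ 0 such that x_j = ã + α_j b̃ for all j ∈ J, Hã = s₀, and Hb̃ = s₁. -/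
/-!
Induction on the rank of the witness set `S`. Two witnesses `x j, x k` with `α j ≠ α k` span a
plane meeting `ker H` only in `0` (as `s₀, s₁` are independent), and determine a line
`a + α b` with `H a = s₀`, `H b = s₁`. If some `x l` of `S` is off this line, then
`x l - (a + α l b)` is a nonzero codeword in the span of `S`, hence of weight `≥ d`; since every
witness has weight `≤ E`, averaging over its support gives a coordinate `i` at which it is
nonzero but at most `|S| E / d` witnesses are. Keeping the witnesses vanishing at `i` retains a
fraction `γ` of `S` and strictly lowers the rank. At rank `≤ 2` no codeword can lie off the
plane (it would raise the rank to `3`), so all of `S` is on the line.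
-/

open Submodule Finset

section LiftedLine

variable {F V W κ : Type*} [Field F] [AddCommGroup V] [Module F V] [AddCommGroup W] [Module F W]

instance finiteDimensional_span_image_finset (x : κ → V) (S : Finset κ) :
    FiniteDimensional F (span F (x '' S)) :=
  FiniteDimensional.span_of_finite F (S.finite_toSet.image x)

def OnLiftedLine (f : V →ₗ[F] W) (s₀ s₁ : W) (α : κ → F) (x : κ → V) (J : Finset κ) : Prop :=
  ∃ a b, f a = s₀ ∧ f b = s₁ ∧ ∀ j ∈ J, x j = a + α j • b

variable {f : V →ₗ[F] W} {s₀ s₁ : W} {α : κ → F} {x : κ → V}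

lemma exists_onLiftedLine_through (hx : ∀ j, f (x j) = s₀ + α j • s₁) {j k : κ}
    (hjk : α j ≠ α k) :
    ∃ a ∈ span F {x j, x k}, ∃ b ∈ span F {x j, x k},
      f a = s₀ ∧ f b = s₁ ∧ x j = a + α j • b ∧ x k = a + α k • b := by
  have hne : α k - α j ≠ 0 := sub_ne_zero.mpr hjk.symm
  set b := (α k - α j)⁻¹ • (x k - x j) with hb_def
  have hb : (α k - α j) • b = x k - x j := by
    rw [hb_def, smul_smul, mul_inv_cancel₀ hne, one_smul]
  have hb_mem : b ∈ span F {x j, x k} :=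
    smul_mem _ _ (sub_mem (subset_span (by simp)) (subset_span (by simp)))
  have hfb : f b = s₁ := by
    have : (α k - α j) • f b = (α k - α j) • s₁ := by
      rw [← map_smul, hb, map_sub, hx, hx]; module
    exact smul_right_injective W hne this
  refine ⟨x j - α j • b, sub_mem (subset_span (by simp)) (smul_mem _ _ hb_mem), b, hb_mem,
    by rw [map_sub, map_smul, hx, hfb]; module, hfb, by module, ?_⟩
  linear_combination (norm := module) -hb

lemma onLiftedLine_of_card_le_one (hx : ∀ j, f (x j) = s₀ + α j • s₁)
    (h : OnLiftedLine f s₀ s₁ α x ∅) {J : Finset κ} (hJ : #J ≤ 1) :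
    OnLiftedLine f s₀ s₁ α x J := by
  obtain ⟨a, b, ha, hb, -⟩ := h
  rcases J.eq_empty_or_nonempty with rfl | ⟨l, hl⟩
  · exact ⟨a, b, ha, hb, by simp⟩
  refine ⟨x l - α l • b, b, by rw [map_sub, map_smul, hx, hb]; module, hb, fun j hj => ?_⟩
  rw [Finset.card_le_one.mp hJ j hj l hl]
  module

lemma eq_zero_of_map_smul_add_smul_eq_zero (hs : LinearIndependent F ![s₀, s₁])
    (hx : ∀ j, f (x j) = s₀ + α j • s₁) {j k : κ} (hjk : α j ≠ α k) {c₀ c₁ : F}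
    (h : f (c₀ • x j + c₁ • x k) = 0) : c₀ = 0 ∧ c₁ = 0 := by
  rw [map_add, map_smul, map_smul, hx, hx] at h
  obtain ⟨e₀, e₁⟩ := LinearIndependent.pair_iff.mp hs (c₀ + c₁) (c₀ * α j + c₁ * α k)
    (by linear_combination (norm := module) h)
  have hc₁ : c₁ = 0 :=
    (mul_eq_zero.mp (by linear_combination e₁ - α j * e₀ : c₁ * (α k - α j) = 0)).resolve_right
      (sub_ne_zero.mpr hjk.symm)
  exact ⟨by linear_combination e₀ - hc₁, hc₁⟩

lemma three_le_finrank_span (hs : LinearIndependent F ![s₀, s₁])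
    (hx : ∀ j, f (x j) = s₀ + α j • s₁) {S : Finset κ} {j k : κ} (hj : j ∈ S) (hk : k ∈ S)
    (hjk : α j ≠ α k) {z : V} (hzS : z ∈ span F (x '' S)) (hz : f z = 0) (hz0 : z ≠ 0) :
    3 ≤ Module.finrank F (span F (x '' S)) := by
  have hli : LinearIndependent F ![z, x j, x k] := by
    refine linearIndependent_finCons.mpr ⟨LinearIndependent.pair_iff.mpr fun c₀ c₁ h =>
      eq_zero_of_map_smul_add_smul_eq_zero hs hx hjk (by rw [h, map_zero]), fun hz_mem => ?_⟩
    rw [Matrix.range_cons, Matrix.range_cons, Matrix.range_empty, Set.union_empty,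
      Set.singleton_union] at hz_mem
    obtain ⟨c₀, c₁, rfl⟩ := mem_span_pair.mp hz_mem
    obtain ⟨rfl, rfl⟩ := eq_zero_of_map_smul_add_smul_eq_zero hs hx hjk hz
    simp at hz0
  calc 3 = Module.finrank F (span F (Set.range ![z, x j, x k])) :=
        (Fintype.card_fin 3).symm.trans (linearIndependent_iff_card_eq_finrank_span.mp hli)
    _ ≤ Module.finrank F (span F (x '' S)) := by
        refine Submodule.finrank_mono (span_le.mpr ?_)
        simp [Set.insert_subset_iff, hzS, subset_span (Set.mem_image_of_mem x (mem_coe.mpr hj)),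
          subset_span (Set.mem_image_of_mem x (mem_coe.mpr hk))]

lemma one_lt_card_of_not_onLiftedLine (hx : ∀ j, f (x j) = s₀ + α j • s₁)
    (h : OnLiftedLine f s₀ s₁ α x ∅) {S : Finset κ} (hS : ¬OnLiftedLine f s₀ s₁ α x S) :
    1 < #S :=
  not_le.mp (mt (onLiftedLine_of_card_le_one hx h) hS)

lemma exists_mem_ker_of_not_onLiftedLine (hx : ∀ j, f (x j) = s₀ + α j • s₁)
    (hα : Function.Injective α) (h : OnLiftedLine f s₀ s₁ α x ∅) {S : Finset κ}
    (hS : ¬OnLiftedLine f s₀ s₁ α x S) : ∃ z ∈ span F (x '' S), f z = 0 ∧ z ≠ 0 := by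
  obtain ⟨j, hj, k, hk, hjk⟩ := one_lt_card.mp (one_lt_card_of_not_onLiftedLine hx h hS)
  obtain ⟨a, ha_mem, b, hb_mem, ha, hb, -, -⟩ := exists_onLiftedLine_through hx (hα.ne hjk)
  obtain ⟨l, hl, hxl⟩ : ∃ l ∈ S, x l ≠ a + α l • b := by
    by_contra! hall
    exact hS ⟨a, b, ha, hb, hall⟩
  have hpair : span F {x j, x k} ≤ span F (x '' S) :=
    span_mono (Set.insert_subset_iff.mpr ⟨⟨j, hj, rfl⟩, Set.singleton_subset_iff.mpr ⟨k, hk, rfl⟩⟩)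
  refine ⟨x l - (a + α l • b), sub_mem (subset_span ⟨l, hl, rfl⟩)
    (add_mem (hpair ha_mem) (smul_mem _ _ (hpair hb_mem))), ?_, sub_ne_zero.mpr hxl⟩
  rw [map_sub, map_add, map_smul, hx, ha, hb, sub_self]

lemma onLiftedLine_of_finrank_le_two (hs : LinearIndependent F ![s₀, s₁])
    (hx : ∀ j, f (x j) = s₀ + α j • s₁) (hα : Function.Injective α)
    (h : OnLiftedLine f s₀ s₁ α x ∅) {S : Finset κ}
    (hS : Module.finrank F (span F (x '' S)) ≤ 2) : OnLiftedLine f s₀ s₁ α x S := by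
  by_contra hS_line
  obtain ⟨z, hzS, hz, hz0⟩ := exists_mem_ker_of_not_onLiftedLine hx hα h hS_line
  obtain ⟨j, hj, k, hk, hjk⟩ := one_lt_card.mp (one_lt_card_of_not_onLiftedLine hx h hS_line)
  have := three_le_finrank_span hs hx hj hk (hα.ne hjk) hzS hz hz0
  omega

end LiftedLine

lemma finrank_span_lt_of_subset_ker {F V κ : Type*} [Field F] [AddCommGroup V] [Module F V]
    (φ : V →ₗ[F] F) {x : κ → V} {S S' : Finset κ} (hS' : S' ⊆ S) (hφ : ∀ j ∈ S', φ (x j) = 0)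
    {z : V} (hzS : z ∈ span F (x '' S)) (hφz : φ z ≠ 0) :
    Module.finrank F (span F (x '' S')) < Module.finrank F (span F (x '' S)) := by
  have hker : span F (x '' S') ≤ LinearMap.ker φ :=
    span_le.mpr (by rintro _ ⟨j, hj, rfl⟩; exact hφ j hj)
  exact Submodule.finrank_lt_finrank_of_lt (SetLike.lt_iff_le_and_exists.mpr
    ⟨span_mono (Set.image_mono (coe_subset.mpr hS')), z, hzS, fun hz => hφz (hker hz)⟩)

lemma exists_sparse_coord {κ ι β : Type*} [Fintype ι] [DecidableEq β] [Zero β]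
    {x : κ → ι → β} {S : Finset κ} {d E : ℕ} (hwt : ∀ j ∈ S, hammingNorm (x j) ≤ E)
    {z : ι → β} (hd : 0 < d) (hz : d ≤ hammingNorm z) :
    ∃ i, z i ≠ 0 ∧ d * #{j ∈ S | x j i ≠ 0} ≤ #S * E := by
  set D : Finset ι := {i | z i ≠ 0}
  have hsum : ∑ i ∈ D, #{j ∈ S | x j i ≠ 0} ≤ #S * E := calc
    _ = ∑ j ∈ S, #{i ∈ D | x j i ≠ 0} :=
        (sum_card_bipartiteAbove_eq_sum_card_bipartiteBelow (fun j i => x j i ≠ 0)).symm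
    _ ≤ ∑ _j ∈ S, E :=
        sum_le_sum fun j hj =>
          (card_le_card (filter_subset_filter _ (subset_univ D))).trans (hwt j hj)
    _ = #S * E := by rw [sum_const, smul_eq_mul]
  obtain ⟨i, hi, hle⟩ := exists_le_of_sum_le (s := D) (card_pos.mp (hd.trans_le hz))
    (f := fun i => d * #{j ∈ S | x j i ≠ 0}) (g := fun _ => #S * E) (by
      rw [← mul_sum, sum_const, smul_eq_mul]
      calc d * ∑ i ∈ D, #{j ∈ S | x j i ≠ 0} ≤ d * (#S * E) := Nat.mul_le_mul_left d hsum
        _ ≤ #D * (#S * E) := Nat.mul_le_mul_right _ hz)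
  exact ⟨i, (mem_filter.mp hi).2, hle⟩

theorem exists_large_onLiftedLine {F W κ ι : Type*} [Field F] [DecidableEq F] [Fintype ι]
    [AddCommGroup W] [Module F W] {f : (ι → F) →ₗ[F] W} {s₀ s₁ : W} {α : κ → F}
    {x : κ → ι → F} {d E : ℕ} (hEd : E < d)
    (hdist : ∀ c, f c = 0 → c ≠ 0 → d ≤ hammingNorm c) (hs : LinearIndependent F ![s₀, s₁])
    (hα : Function.Injective α) (hx : ∀ j, f (x j) = s₀ + α j • s₁)
    (hwt : ∀ j, hammingNorm (x j) ≤ E) (h : OnLiftedLine f s₀ s₁ α x ∅) (m : ℕ) (S : Finset κ)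
    (hS : Module.finrank F (span F (x '' S)) ≤ m + 2) :
    ∃ J, (#S : ℝ) * (((d : ℝ) - E) / d) ^ m ≤ #J ∧ OnLiftedLine f s₀ s₁ α x J := by
  set γ : ℝ := ((d : ℝ) - E) / d
  have hd : (0 : ℝ) < d := by exact_mod_cast (Nat.zero_le E).trans_lt hEd
  have hEd' : (E : ℝ) < d := by exact_mod_cast hEd
  have hγ0 : 0 ≤ γ := div_nonneg (by linarith) hd.le
  have hγ1 : γ ≤ 1 := (div_le_one hd).mpr (by linarith [(E.cast_nonneg : (0 : ℝ) ≤ E)])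
  induction m generalizing S with
  | zero => exact ⟨S, by simp, onLiftedLine_of_finrank_le_two hs hx hα h hS⟩
  | succ m ih =>
    by_cases hS_line : OnLiftedLine f s₀ s₁ α x S
    · exact ⟨S, mul_le_of_le_one_right (Nat.cast_nonneg _) (pow_le_one₀ hγ0 hγ1), hS_line⟩
    obtain ⟨z, hzS, hz, hz0⟩ := exists_mem_ker_of_not_onLiftedLine hx hα h hS_line
    obtain ⟨i, hzi, hcount⟩ :=
      exists_sparse_coord (S := S) (fun j _ => hwt j) (by exact_mod_cast hd) (hdist z hz hz0)
    set S' := {j ∈ S | x j i = 0}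
    have hS' : Module.finrank F (span F (x '' S')) ≤ m + 2 := by
      have := finrank_span_lt_of_subset_ker (S' := S') (LinearMap.proj i) (filter_subset _ S)
        (fun j hj => (mem_filter.mp hj).2) hzS hzi
      omega
    -- Deleting the coordinate `i` loses at most a fraction `E / d` of `S`.
    have hS'_card : (#S : ℝ) * γ ≤ #S' := by
      have hsplit : (#S' : ℝ) + #{j ∈ S | x j i ≠ 0} = #S := by
        exact_mod_cast card_filter_add_card_filter_not _
      have hcount' : (d : ℝ) * #{j ∈ S | x j i ≠ 0} ≤ #S * E := by exact_mod_cast hcount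
      rw [mul_div_assoc', div_le_iff₀ hd]
      nlinarith
    obtain ⟨J, hJ, hJ_line⟩ := ih S' hS'
    refine ⟨J, ?_, hJ_line⟩
    calc (#S : ℝ) * γ ^ (m + 1) = #S * γ * γ ^ m := by ring
      _ ≤ #S' * γ ^ m := mul_le_mul_of_nonneg_right hS'_card (pow_nonneg hγ0 m)
      _ ≤ #J := hJ

theorem stmt_7_general {F : Type} [Field F] [DecidableEq F] {r n : ℕ}
    (H : Matrix (Fin r) (Fin n) F) (d E : ℕ) (hEd : E < d)
    (hdist : ∀ c : Fin n → F, H.mulVec c = 0 → c ≠ 0 → d ≤ hammingNorm c)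
    (γ : ℝ) (hγ : γ = ((d : ℝ) - E) / d)
    (s₀ s₁ : Fin r → F)
    (hdim : Module.finrank F (Submodule.span F ({s₀, s₁} : Set (Fin r → F))) = 2)
    (K : ℕ) (α : Fin K → F) (hα : Function.Injective α)
    (x : Fin K → Fin n → F)
    (hwit : ∀ j : Fin K, H.mulVec (x j) = s₀ + α j • s₁ ∧ hammingNorm (x j) ≤ E)
    (t : ℕ) (ht : 2 ≤ t)
    (hrank : (Matrix.of fun (i : Fin n) (j : Fin K) => x j i).rank = t) :
    ∃ J : Finset (Fin K),
      (K : ℝ) * γ ^ (t - 2) ≤ (J.card : ℝ) ∧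
      ∃ a b : Fin n → F, b ≠ 0 ∧ (∀ j ∈ J, x j = a + α j • b) ∧
        H.mulVec a = s₀ ∧ H.mulVec b = s₁ := by
  have hs : LinearIndependent F ![s₀, s₁] := by
    rw [linearIndependent_iff_card_eq_finrank_span, Matrix.range_cons, Matrix.range_cons,
      Matrix.range_empty, Set.union_empty, Set.singleton_union]
    exact hdim.symm
  have hx : ∀ j, H.mulVecLin (x j) = s₀ + α j • s₁ := fun j => (hwit j).1
  have hspan : Module.finrank F (span F (x '' (univ : Finset (Fin K)))) = t := by
    rw [← hrank, Matrix.rank_eq_finrank_span_cols, coe_univ, Set.image_univ]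
    rfl
  obtain ⟨j, k, hjk⟩ : ∃ j k : Fin K, j ≠ k := by
    have := (Matrix.of fun (i : Fin n) (j : Fin K) => x j i).rank_le_width
    exact ⟨⟨0, by omega⟩, ⟨1, by omega⟩, by simp [Fin.ext_iff]⟩
  obtain ⟨a₀, -, b₀, -, ha₀, hb₀, -, -⟩ := exists_onLiftedLine_through hx (hα.ne hjk)
  obtain ⟨J, hJ, a, b, ha, hb, hJ_line⟩ := exists_large_onLiftedLine hEd hdist hs hα hx
    (fun j => (hwit j).2) ⟨a₀, b₀, ha₀, hb₀, by simp⟩ (t - 2) univ (by omega)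
  refine ⟨J, by simpa [hγ] using hJ, a, b, ?_, hJ_line, ha, hb⟩
  rintro rfl
  exact hs.ne_zero 1 (by simpa using hb.symm)

/-- Rank-two extraction: from a rank-`t ≥ 2` `E`-witness matrix covering `K` points of a
nondegenerate syndrome line, at least `K·γ^{t−2}` of the witness columns lie on a common
affine line `ã + α b̃` with `H ã = s₀`, `H b̃ = s₁`. -/
theorem stmt_7 {F : Type} [Field F] [Fintype F] [DecidableEq F] {r n : ℕ}
    (H : Matrix (Fin r) (Fin n) F) (d E : ℕ) (hE0 : 0 < E) (hEd : E < d)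
    (hdist : ∀ c : Fin n → F, H.mulVec c = 0 → c ≠ 0 → d ≤ hammingNorm c)
    (γ : ℝ) (hγ : γ = ((d : ℝ) - E) / d)
    (s₀ s₁ : Fin r → F)
    (hdim : Module.finrank F (Submodule.span F ({s₀, s₁} : Set (Fin r → F))) = 2)
    (K : ℕ) (α : Fin K → F) (hα : Function.Injective α)
    (x : Fin K → Fin n → F)
    (hwit : ∀ j : Fin K, H.mulVec (x j) = s₀ + α j • s₁ ∧ hammingNorm (x j) ≤ E)
    (t : ℕ) (ht : 2 ≤ t)
    (hrank : (Matrix.of fun (i : Fin n) (j : Fin K) => x j i).rank = t) :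
    ∃ J : Finset (Fin K),
      (K : ℝ) * γ ^ (t - 2) ≤ (J.card : ℝ) ∧
      ∃ a b : Fin n → F, b ≠ 0 ∧ (∀ j ∈ J, x j = a + α j • b) ∧
        H.mulVec a = s₀ ∧ H.mulVec b = s₁ :=
  stmt_7_general H d E hEd hdist γ hγ s₀ s₁ hdim K α hα x hwit t ht hrank
end

section
/- Let q be a prime power, H ∈ 𝔽_q^{r×n}, and let C = ker(H) be a linear code with minimum distance d(C) ≥ d. Let 0 < E ≤ E⁺ < d and K ≥ 2, and set γ := (d − E)/d and B_{E,E⁺} := ⌊(E⁺ + 1)/(E⁺ − E + 1)⌋. Let s₀, s₁ ∈ 𝔽_q^r with dim_{𝔽_q} span{s₀,s₁} = 2 and L = {s₀ + α s₁ : α ∈ 𝔽_q}. Suppose there exist pairwise distinct α₁,…,α_K ∈ 𝔽_q and a matrix X = [x₁|⋯|x_K] ∈ 𝔽_q^{n×K} of rank t with Hx_j = s₀ + α_j s₁ and wt(x_j) ≤ E for all j ∈ [K]. If L ⊄ H_{E⁺}, then K·γ^{t−2} ≤ B_{E,E⁺}. -/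
/-!
Let `V` be the span of the witnesses and `W = V ∩ ker H` its space of codewords. Since `H` maps
`V` onto `span {s₀, s₁}`, `dim W ≤ t - 2`, and we induct on `dim W`.

If `W = 0`, then `H` is injective on `V`, so the witnesses lie on one affine line `u + β v` whose
syndromes form `L`. Pick `s₀ + a₀ s₁ ∈ L` outside `H_{E⁺}`; then `u + a₀ v` has weight above `E⁺`,
and each coordinate in its support vanishes at no more than one point of the line. Summing the
weights of the `K` witnesses gives `(K - 1)(E⁺ + 1) ≤ K E`, i.e. `K (E⁺ - E + 1) ≤ E⁺ + 1`.

If `W ≠ 0`, a nonzero codeword `c ∈ W` has weight at least `d`, and averaging the weights of the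
witnesses over the support of `c` gives a coordinate `i` with `c i ≠ 0` at which at least `γ K`
witnesses vanish. Those witnesses span a subspace missing `c`, so their space of codewords is
smaller and induction applies to them.
-/

open Finset

section Counting

variable {ι κ : Type*} [Fintype ι]

theorem sum_hammingNorm_eq_sum_card_ne_zero [Fintype κ] {M : Type*} [Zero M] [DecidableEq M]
    (x : ι → κ → M) : ∑ j, hammingNorm (x j) = ∑ i, #{j | x j i ≠ 0} := by
  simp only [hammingNorm, card_filter]
  exact sum_comm

theorem exists_mem_mul_card_ne_zero_le [Fintype κ] {M : Type*} [Zero M] [DecidableEq M]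
    {x : ι → κ → M} {E : ℕ} (hx : ∀ j, hammingNorm (x j) ≤ E) {S : Finset κ} (hS : S.Nonempty) :
    ∃ i ∈ S, #S * #{j | x j i ≠ 0} ≤ Fintype.card ι * E := by
  refine exists_le_of_sum_le hS ?_
  calc ∑ i ∈ S, #S * #{j | x j i ≠ 0} = #S * ∑ i ∈ S, #{j | x j i ≠ 0} := (mul_sum ..).symm
    _ ≤ #S * ∑ j, hammingNorm (x j) := by
      rw [sum_hammingNorm_eq_sum_card_ne_zero]
      exact Nat.mul_le_mul_left _ (sum_le_sum_of_subset S.subset_univ)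
    _ ≤ #S * (Fintype.card ι * E) := by
      grw [sum_le_sum fun j _ ↦ hx j, sum_const, card_univ, smul_eq_mul]
    _ = ∑ i ∈ S, Fintype.card ι * E := by rw [sum_const, smul_eq_mul]

variable {F : Type*} [Field F] [DecidableEq F]

theorem card_add_smul_apply_eq_zero_le_one {α : ι → F} (hα : Function.Injective α)
    {u v : κ → F} {β : F} {i : κ} (hi : (u + β • v) i ≠ 0) :
    #{j | (u + α j • v) i = 0} ≤ 1 := by
  refine card_le_one.2 fun j hj j' hj' ↦ hα ?_
  simp only [mem_filter, mem_univ, true_and, Pi.add_apply, Pi.smul_apply, smul_eq_mul] at hj hj' hi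
  have hv : v i ≠ 0 := fun hv ↦ hi (by simpa [hv] using hj)
  exact mul_right_cancel₀ hv (by linear_combination hj - hj')

theorem card_sub_one_mul_hammingNorm_le_sum [Fintype κ] {α : ι → F} (hα : Function.Injective α)
    (u v : κ → F) (β : F) :
    (Fintype.card ι - 1) * hammingNorm (u + β • v) ≤ ∑ j, hammingNorm (u + α j • v) := by
  rw [sum_hammingNorm_eq_sum_card_ne_zero, hammingNorm, mul_comm, ← smul_eq_mul, ← sum_const]
  refine (sum_le_sum fun i hi ↦ ?_).trans (sum_le_sum_of_subset (subset_univ _))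
  have hsplit : #{j | (u + α j • v) i = 0} + #{j | (u + α j • v) i ≠ 0} = Fintype.card ι :=
    card_filter_add_card_filter_not _
  have := card_add_smul_apply_eq_zero_le_one hα (mem_filter.1 hi).2
  omega

end Counting

namespace Submodule

open Module in
theorem finrank_map_add_finrank_inf_ker {K V W : Type*} [DivisionRing K] [AddCommGroup V]
    [Module K V] [AddCommGroup W] [Module K W] [FiniteDimensional K V]
    (p : Submodule K V) (f : V →ₗ[K] W) :
    finrank K (p.map f) + finrank K ↥(p ⊓ LinearMap.ker f) = finrank K p := by
  rw [← LinearMap.range_domRestrict, ← (f.domRestrict p).finrank_range_add_finrank_ker,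
    LinearMap.ker_domRestrict, ← map_comap_subtype, finrank_map_subtype_eq]

end Submodule

section Syndromes

open Matrix Submodule

variable {F : Type} [Field F] {r n : ℕ}
  (H : Matrix (Fin r) (Fin n) F) {s₀ s₁ : Fin r → F}

theorem mulVec_slope {a b : F} (hab : a ≠ b) {y z : Fin n → F}
    (hy : H *ᵥ y = s₀ + a • s₁) (hz : H *ᵥ z = s₀ + b • s₁) :
    H *ᵥ ((b - a)⁻¹ • (z - y)) = s₁ := by
  rw [mulVec_smul, mulVec_sub, hy, hz, add_sub_add_left_eq_sub, ← sub_smul,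
    smul_smul, inv_mul_cancel₀ (sub_ne_zero.2 hab.symm), one_smul]

variable {ι : Type} {α : ι → F} {x : ι → Fin n → F}

theorem span_pair_le_map_span_range (hx : ∀ j, H *ᵥ x j = s₀ + α j • s₁) {j₀ j₁ : ι}
    (hne : α j₀ ≠ α j₁) :
    span F {s₀, s₁} ≤ (span F (Set.range x)).map H.mulVecLin := by
  have hmem : ∀ j, x j ∈ span F (Set.range x) := fun j ↦ subset_span (Set.mem_range_self j)
  have hv : (α j₁ - α j₀)⁻¹ • (x j₁ - x j₀) ∈ span F (Set.range x) :=
    smul_mem _ _ (sub_mem (hmem j₁) (hmem j₀))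
  have hs₁ := mulVec_slope H hne (hx j₀) (hx j₁)
  rw [span_le, Set.insert_subset_iff, Set.singleton_subset_iff]
  refine ⟨⟨_, sub_mem (hmem j₀) (smul_mem _ (α j₀) hv), ?_⟩, ⟨_, hv, hs₁⟩⟩
  rw [mulVecLin_apply, mulVec_sub, mulVec_smul, hs₁, hx, add_sub_cancel_right]

theorem exists_eq_add_smul_of_disjoint_ker (hx : ∀ j, H *ᵥ x j = s₀ + α j • s₁)
    {j₀ j₁ : ι} (hne : α j₀ ≠ α j₁)
    (hdisj : Disjoint (span F (Set.range x)) (LinearMap.ker H.mulVecLin)) :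
    ∃ u v : Fin n → F, H *ᵥ u = s₀ ∧ H *ᵥ v = s₁ ∧ ∀ j, x j = u + α j • v := by
  set v := (α j₁ - α j₀)⁻¹ • (x j₁ - x j₀)
  have hmem : ∀ j, x j ∈ span F (Set.range x) := fun j ↦ subset_span (Set.mem_range_self j)
  have hvV : v ∈ span F (Set.range x) := smul_mem _ _ (sub_mem (hmem j₁) (hmem j₀))
  have hv : H *ᵥ v = s₁ := mulVec_slope H hne (hx j₀) (hx j₁)
  clear_value v
  refine ⟨x j₀ - α j₀ • v, v, ?_, hv, fun j ↦ ?_⟩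
  · rw [mulVec_sub, mulVec_smul, hx, hv, add_sub_cancel_right]
  rw [← sub_eq_zero]
  refine disjoint_def.1 hdisj _ ?_ ?_
  · exact sub_mem (hmem j) (add_mem (sub_mem (hmem j₀) (smul_mem _ _ hvV)) (smul_mem _ _ hvV))
  · simp only [LinearMap.mem_ker, mulVecLin_apply, mulVec_sub, mulVec_add, mulVec_smul, hx, hv]
    abel

theorem card_le_of_disjoint_ker [Fintype F] [DecidableEq F] [Fintype ι] {E Ep : ℕ}
    (hEEp : E ≤ Ep) (hα : Function.Injective α) (hx : ∀ j, H *ᵥ x j = s₀ + α j • s₁)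
    (hwt : ∀ j, hammingNorm (x j) ≤ E) {a₀ : F} (hbad : s₀ + a₀ • s₁ ∉ syndromeBall H Ep)
    (hdisj : Disjoint (span F (Set.range x)) (LinearMap.ker H.mulVecLin)) :
    Fintype.card ι ≤ (Ep + 1) / (Ep - E + 1) := by
  rw [Nat.le_div_iff_mul_le (by omega)]
  rcases le_or_gt (Fintype.card ι) 1 with hK | hK
  · calc Fintype.card ι * (Ep - E + 1) ≤ 1 * (Ep - E + 1) := by gcongr
      _ ≤ Ep + 1 := by omega
  obtain ⟨j₀, j₁, hj⟩ := Fintype.one_lt_card_iff.1 hK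
  obtain ⟨u, v, hu, hv, hxuv⟩ := exists_eq_add_smul_of_disjoint_ker H hx (hα.ne hj) hdisj
  have hfar : Ep + 1 ≤ hammingNorm (u + a₀ • v) := by
    by_contra! h
    exact hbad ⟨u + a₀ • v, by omega, by rw [mulVec_add, mulVec_smul, hu, hv]⟩
  have hnear : ∑ j, hammingNorm (u + α j • v) ≤ Fintype.card ι * E := by
    calc ∑ j, hammingNorm (u + α j • v) = ∑ j, hammingNorm (x j) := by simp_rw [← hxuv]
      _ ≤ ∑ _j : ι, E := sum_le_sum fun j _ ↦ hwt j
      _ = Fintype.card ι * E := by simp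
  have hline := (card_sub_one_mul_hammingNorm_le_sum hα u v a₀).trans hnear
  obtain ⟨k, hk⟩ : ∃ k, Fintype.card ι = k + 1 := ⟨_, (Nat.sub_add_cancel hK.le).symm⟩
  rw [hk, Nat.add_sub_cancel] at hline
  rw [hk]
  zify [hEEp] at *
  nlinarith

theorem finrank_inf_ker_lt_of_apply_ne_zero {W : Type*} [AddCommGroup W] [Module F W]
    (f : (Fin n → F) →ₗ[F] W) {c : Fin n → F} (hc : c ∈ span F (Set.range x) ⊓ LinearMap.ker f)
    {i : Fin n} (hci : c i ≠ 0) :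
    Module.finrank F ↥(span F (Set.range fun j : {j // x j i = 0} ↦ x j) ⊓ LinearMap.ker f) <
      Module.finrank F ↥(span F (Set.range x) ⊓ LinearMap.ker f) := by
  refine finrank_lt_finrank_of_lt (SetLike.lt_iff_le_and_exists.2 ⟨?_, c, hc, fun hc' ↦ hci ?_⟩)
  · exact inf_le_inf_right _ (span_mono (by rintro _ ⟨j, rfl⟩; exact ⟨j, rfl⟩))
  · have hle : span F (Set.range fun j : {j // x j i = 0} ↦ x j) ≤
        LinearMap.ker (LinearMap.proj (R := F) (φ := fun _ : Fin n ↦ F) i) :=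
      span_le.2 (by rintro _ ⟨j, rfl⟩; exact j.2)
    exact hle (inf_le_left (a := span F _) hc')

theorem card_mul_pow_le_of_finrank_inf_ker_le [Fintype F] [DecidableEq F] {d E Ep : ℕ}
    (hEEp : E ≤ Ep) (hEpd : Ep < d)
    (hdist : ∀ c : Fin n → F, H *ᵥ c = 0 → c ≠ 0 → d ≤ hammingNorm c)
    {a₀ : F} (hbad : s₀ + a₀ • s₁ ∉ syndromeBall H Ep) (m : ℕ)
    {ι : Type} [Fintype ι] {α : ι → F} (hα : Function.Injective α) {x : ι → Fin n → F}
    (hx : ∀ j, H *ᵥ x j = s₀ + α j • s₁) (hwt : ∀ j, hammingNorm (x j) ≤ E)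
    (hm : Module.finrank F ↥(span F (Set.range x) ⊓ LinearMap.ker H.mulVecLin) ≤ m) :
    (Fintype.card ι : ℝ) * (((d : ℝ) - E) / d) ^ m ≤ ((Ep + 1) / (Ep - E + 1) : ℕ) := by
  have hd : (0 : ℝ) < d := by exact_mod_cast (show 0 < d by omega)
  have hEd : (E : ℝ) ≤ d := by exact_mod_cast (show E ≤ d by omega)
  set γ := ((d : ℝ) - E) / d with hγ
  have hγ0 : 0 ≤ γ := div_nonneg (by linarith) hd.le
  have hγ1 : γ ≤ 1 := (div_le_one hd).2 (by simp)
  induction m generalizing ι with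
  | zero =>
    have hdisj := disjoint_iff.2 (finrank_eq_zero.1 (Nat.le_zero.1 hm))
    simpa using (Nat.cast_le (α := ℝ)).2 (card_le_of_disjoint_ker H hEEp hα hx hwt hbad hdisj)
  | succ m ih =>
    by_cases hdisj : Disjoint (span F (Set.range x)) (LinearMap.ker H.mulVecLin)
    · calc (Fintype.card ι : ℝ) * γ ^ (m + 1) ≤ Fintype.card ι * 1 := by
            gcongr; exact pow_le_one₀ hγ0 hγ1
        _ ≤ _ := by
          rw [mul_one]
          exact_mod_cast card_le_of_disjoint_ker H hEEp hα hx hwt hbad hdisj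
    obtain ⟨c, hc, hc0⟩ := exists_mem_ne_zero_of_ne_bot (mt disjoint_iff.2 hdisj)
    have hdc : d ≤ hammingNorm c := hdist c (LinearMap.mem_ker.1 hc.2) hc0
    obtain ⟨i, hi, hcount⟩ := exists_mem_mul_card_ne_zero_le hwt
      (card_pos.1 (show 0 < hammingNorm c by omega))
    have hci : c i ≠ 0 := (mem_filter.1 hi).2
    have hzeros := ih (α := fun j : {j // x j i = 0} ↦ α j) (x := fun j ↦ x j)
      (hα.comp Subtype.val_injective) (fun j ↦ hx j) (fun j ↦ hwt j)
      (by have := finrank_inf_ker_lt_of_apply_ne_zero H.mulVecLin hc hci; omega)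
    have hsplit : Fintype.card {j // x j i = 0} + #{j | x j i ≠ 0} = Fintype.card ι := by
      rw [Fintype.card_subtype]
      exact card_filter_add_card_filter_not _
    have hnz : d * #{j | x j i ≠ 0} ≤ Fintype.card ι * E :=
      (Nat.mul_le_mul_right _ hdc).trans hcount
    have hfrac : (Fintype.card ι : ℝ) * γ ≤ Fintype.card {j // x j i = 0} := by
      rw [hγ, mul_div_assoc', div_le_iff₀ hd]
      have hsplit' : (Fintype.card {j // x j i = 0} : ℝ) + (#{j | x j i ≠ 0} : ℕ) =
          Fintype.card ι := by exact_mod_cast hsplit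
      have hnz' : (d : ℝ) * (#{j | x j i ≠ 0} : ℕ) ≤ Fintype.card ι * E := by exact_mod_cast hnz
      nlinarith
    calc (Fintype.card ι : ℝ) * γ ^ (m + 1) = Fintype.card ι * γ * γ ^ m := by ring
      _ ≤ Fintype.card {j // x j i = 0} * γ ^ m := by gcongr
      _ ≤ _ := hzeros

end Syndromes

theorem stmt_8_general {F : Type} [Field F] [Fintype F] [DecidableEq F] {r n : ℕ}
    (H : Matrix (Fin r) (Fin n) F) (d E Ep : ℕ)
    (hEEp : E ≤ Ep) (hEpd : Ep < d)
    (hdist : ∀ c : Fin n → F, H.mulVec c = 0 → c ≠ 0 → d ≤ hammingNorm c)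
    (K : ℕ) (hK : 2 ≤ K)
    (γ : ℝ) (hγ : γ = ((d : ℝ) - E) / d)
    (B : ℕ) (hB : B = (Ep + 1) / (Ep - E + 1))
    (s₀ s₁ : Fin r → F)
    (hdim : Module.finrank F (Submodule.span F ({s₀, s₁} : Set (Fin r → F))) = 2)
    (α : Fin K → F) (hα : Function.Injective α)
    (x : Fin K → Fin n → F)
    (hwit : ∀ j : Fin K, H.mulVec (x j) = s₀ + α j • s₁ ∧ hammingNorm (x j) ≤ E)
    (t : ℕ) (hrank : (Matrix.of fun (i : Fin n) (j : Fin K) => x j i).rank = t)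
    (hnot : ¬ {u : Fin r → F | ∃ a : F, u = s₀ + a • s₁} ⊆ syndromeBall H Ep) :
    (K : ℝ) * γ ^ (t - 2) ≤ (B : ℝ) := by
  subst hγ hB
  obtain ⟨_, ⟨a₀, rfl⟩, hbad⟩ := Set.not_subset.1 hnot
  obtain ⟨j₀, j₁, hj⟩ := (Fin.nontrivial_iff_two_le.2 hK).exists_pair_ne
  have hx := fun j ↦ (hwit j).1
  have hV : Module.finrank F (Submodule.span F (Set.range x)) = t := by
    rw [← hrank, Matrix.rank_eq_finrank_span_cols]
    rfl
  have himage := Submodule.finrank_mono (span_pair_le_map_span_range H hx (hα.ne hj))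
  have hnullity :=
    Submodule.finrank_map_add_finrank_inf_ker (Submodule.span F (Set.range x)) H.mulVecLin
  simpa using card_mul_pow_le_of_finrank_inf_ker_le H hEEp hEpd hdist hbad (t - 2) hα hx
    (fun j ↦ (hwit j).2) (by omega)

/-- Minimum witness rank threshold: a bad syndrome line (with an `E`-witness matrix of
rank `t` covering `K` points, but not contained in `H_{E⁺}`) satisfies
`K·γ^{t−2} ≤ ⌊(E⁺+1)/(E⁺−E+1)⌋`. -/
theorem stmt_8 {F : Type} [Field F] [Fintype F] [DecidableEq F] {r n : ℕ}
    (H : Matrix (Fin r) (Fin n) F) (d E Ep : ℕ)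
    (hE0 : 0 < E) (hEEp : E ≤ Ep) (hEpd : Ep < d)
    (hdist : ∀ c : Fin n → F, H.mulVec c = 0 → c ≠ 0 → d ≤ hammingNorm c)
    (K : ℕ) (hK : 2 ≤ K)
    (γ : ℝ) (hγ : γ = ((d : ℝ) - E) / d)
    (B : ℕ) (hB : B = (Ep + 1) / (Ep - E + 1))
    (s₀ s₁ : Fin r → F)
    (hdim : Module.finrank F (Submodule.span F ({s₀, s₁} : Set (Fin r → F))) = 2)
    (α : Fin K → F) (hα : Function.Injective α)
    (x : Fin K → Fin n → F)
    (hwit : ∀ j : Fin K, H.mulVec (x j) = s₀ + α j • s₁ ∧ hammingNorm (x j) ≤ E)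
    (t : ℕ) (hrank : (Matrix.of fun (i : Fin n) (j : Fin K) => x j i).rank = t)
    (hnot : ¬ {u : Fin r → F | ∃ a : F, u = s₀ + a • s₁} ⊆ syndromeBall H Ep) :
    (K : ℝ) * γ ^ (t - 2) ≤ (B : ℝ) :=
  stmt_8_general H d E Ep hEEp hEpd hdist K hK γ hγ B hB s₀ s₁ hdim α hα x hwit t hrank hnot
end

section
/- Let q be a prime power and let r, n be positive integers. Let 0 < E ≤ E⁺ be integers with E < d, let s ≥ 0 be an integer, and set γ := (d − E)/d and B_{E,E⁺} := ⌊(E⁺ + 1)/(E⁺ − E + 1)⌋. Assume K ≥ 2 is an integer with K > B_{E,E⁺}·γ^{−s}. Then, for H drawn uniformly at random from 𝔽_q^{r×n} with C := ker(H), the probability that there exists an affine syndrome line L = {s₀ + α s₁ : α ∈ 𝔽_q} ⊆ 𝔽_q^r such that |L ∩ H_E| ≥ K, L ⊄ H_{E⁺}, and the minimum distance of C is at least d, is at most q^{2r}·C(q,K)·C(K,s+3)·|B_E|^{s+3}·q^{−r(s+3)}, where C(a,b) denotes the binomial coefficient and |B_E| = Σ_{i=0}^{E} C(n,i)(q−1)^i.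 -/
open Finset Module Submodule Matrix

section Hamming

lemma sum_card_filter_ne_zero_comm {α ι M : Type*} [Zero M] [DecidableEq M] (A : Finset α)
    (S : Finset ι) (x : α → ι → M) :
    ∑ j ∈ S, #{α ∈ A | x α j ≠ 0} = ∑ α ∈ A, #{j ∈ S | x α j ≠ 0} :=
  (sum_card_bipartiteAbove_eq_sum_card_bipartiteBelow _).symm

variable {ι F : Type*} [Fintype ι] [Field F] [DecidableEq F]

theorem card_filter_hammingNorm_le_le_sum [DecidableEq ι] [Fintype F] (E : ℕ) :
    #{x : ι → F | hammingNorm x ≤ E} ≤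
      ∑ i ∈ range (E + 1), (Fintype.card ι).choose i * (Fintype.card F - 1) ^ i := by
  let withSupport (S : Finset ι) : Finset (ι → F) :=
    Fintype.piFinset fun j => if j ∈ S then univ.erase 0 else {0}
  have hcover : ({x | hammingNorm x ≤ E} : Finset (ι → F)) ⊆
      (range (E + 1)).biUnion fun i => (powersetCard i univ).biUnion withSupport := by
    intro x hx
    simp only [mem_filter, mem_univ, true_and] at hx
    simp only [mem_biUnion, mem_range, mem_powersetCard_univ]
    refine ⟨hammingNorm x, Nat.lt_succ_of_le hx, ({j | x j ≠ 0} : Finset ι), rfl, ?_⟩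
    simp only [withSupport, Fintype.mem_piFinset]
    intro j
    split_ifs with hj <;> simp_all
  have hcard (S : Finset ι) : #(withSupport S) = (Fintype.card F - 1) ^ #S := by
    simp only [withSupport, Fintype.card_piFinset, apply_ite card, card_erase_of_mem (mem_univ _),
      card_univ, card_singleton, prod_ite_mem, univ_inter, prod_const]
  refine (card_le_card hcover).trans (card_biUnion_le.trans (sum_le_sum fun i _ => ?_))
  refine card_biUnion_le.trans (le_of_eq ?_)
  rw [sum_congr rfl fun S hS => by rw [hcard, (mem_powersetCard.mp hS).2], sum_const,
    card_powersetCard, card_univ, smul_eq_mul]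

lemma card_filter_ne_zero_le_hammingNorm (S : Finset ι) (x : ι → F) :
    #{j ∈ S | x j ≠ 0} ≤ hammingNorm x :=
  card_le_card (filter_subset_filter _ (subset_univ S))

theorem hammingNorm_add_smul_mul_card_sub_one_le_sum (x₀ w : ι → F) (A : Finset F) (β : F) :
    hammingNorm (x₀ + β • w) * (#A - 1) ≤ ∑ α ∈ A, hammingNorm (x₀ + α • w) := by
  set S : Finset ι := {j | (x₀ + β • w) j ≠ 0}
  have hzero (j) (hj : j ∈ S) : #{α ∈ A | (x₀ + α • w) j = 0} ≤ 1 := by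
    refine card_le_one.mpr fun α hα α' hα' => ?_
    simp only [S, mem_filter, Pi.add_apply, Pi.smul_apply, smul_eq_mul] at hα hα' hj
    by_contra hne
    have hw : w j = 0 := by
      have : (α - α') * w j = 0 := by linear_combination hα.2 - hα'.2
      exact (mul_eq_zero.mp this).resolve_left (sub_ne_zero.mpr hne)
    exact hj.2 (by simp_all)
  calc hammingNorm (x₀ + β • w) * (#A - 1) = ∑ _j ∈ S, (#A - 1) := by
        rw [sum_const, smul_eq_mul]; rfl
    _ ≤ ∑ j ∈ S, #{α ∈ A | (x₀ + α • w) j ≠ 0} := sum_le_sum fun j hj => by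
        have := card_filter_add_card_filter_not (s := A) (p := fun α => (x₀ + α • w) j = 0)
        have := hzero j hj
        simp only [ne_eq] at *
        omega
    _ = ∑ α ∈ A, #{j ∈ S | (x₀ + α • w) j ≠ 0} := sum_card_filter_ne_zero_comm A S _
    _ ≤ ∑ α ∈ A, hammingNorm (x₀ + α • w) :=
        sum_le_sum fun α _ => card_filter_ne_zero_le_hammingNorm S _

theorem exists_card_filter_mul_hammingNorm_le_sum {α : Type*} (A : Finset α) (x : α → ι → F)
    {c : ι → F} (hc : c ≠ 0) :
    ∃ j, c j ≠ 0 ∧ #{α ∈ A | x α j ≠ 0} * hammingNorm c ≤ ∑ α ∈ A, hammingNorm (x α) := by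
  set S : Finset ι := {j | c j ≠ 0}
  have hS : S.Nonempty := by
    obtain ⟨j, hj⟩ := Function.ne_iff.mp hc
    exact ⟨j, by simpa [S] using hj⟩
  obtain ⟨j, hjS, hjmin⟩ := exists_min_image S (fun j => #{α ∈ A | x α j ≠ 0}) hS
  refine ⟨j, (mem_filter.mp hjS).2, ?_⟩
  calc #{α ∈ A | x α j ≠ 0} * hammingNorm c = #S • #{α ∈ A | x α j ≠ 0} := by
        rw [smul_eq_mul, mul_comm]; rfl
    _ ≤ ∑ j ∈ S, #{α ∈ A | x α j ≠ 0} := card_nsmul_le_sum S _ _ hjmin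
    _ = ∑ α ∈ A, #{j ∈ S | x α j ≠ 0} := sum_card_filter_ne_zero_comm A S x
    _ ≤ ∑ α ∈ A, hammingNorm (x α) := sum_le_sum fun α _ => card_filter_ne_zero_le_hammingNorm S _

end Hamming

theorem LinearMap.card_fiber_mul_le {K V W : Type*} [Field K] [Fintype K] [AddCommGroup V]
    [Module K V] [Fintype V] [AddCommGroup W] [Module K W] [DecidableEq W]
    (f : V →ₗ[K] W) (w : W) :
    #{v | f v = w} * Fintype.card K ^ finrank K (range f) ≤ Fintype.card K ^ finrank K V := by
  by_cases hw : w ∈ Set.range f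
  · rw [AddMonoidHom.card_fiber_eq_of_mem_range f hw ⟨0, map_zero f⟩]
    have hker : #{v | f v = 0} = Fintype.card K ^ finrank K (ker f) := by
      classical
      rw [← Module.card_eq_pow_finrank, ← Fintype.card_subtype]
      exact Fintype.card_congr (Equiv.subtypeEquivRight fun v => LinearMap.mem_ker.symm)
    rw [hker, ← pow_add, add_comm, LinearMap.finrank_range_add_finrank_ker]
  · rw [filter_false_of_mem fun v _ hv => hw ⟨v, hv⟩, card_empty, zero_mul]
    exact Nat.zero_le _

theorem card_filter_mulVec_eq_mul_le {m ι κ K : Type*} [Fintype m] [DecidableEq m] [Fintype ι]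
    [DecidableEq ι] [Fintype κ] [Field K] [Fintype K] [DecidableEq K] {v : κ → ι → K}
    (hv : LinearIndependent K v) (t : κ → m → K) :
    #{H : Matrix m ι K | ∀ i, H *ᵥ v i = t i} * Fintype.card K ^ (Fintype.card m * Fintype.card κ)
      ≤ Fintype.card K ^ (Fintype.card m * Fintype.card ι) := by
  set X : Matrix κ ι K := Matrix.of v
  have hrank : finrank K (LinearMap.range X.mulVecLin) = Fintype.card κ :=
    LinearIndependent.rank_matrix (M := X) hv
  have hrows : #{H : Matrix m ι K | ∀ i, H *ᵥ v i = t i} =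
      #(Fintype.piFinset fun j => {h | X.mulVecLin h = fun i => t i j}) := by
    refine card_equiv Matrix.of.symm fun H => ?_
    simp only [mem_filter, mem_univ, true_and, Fintype.mem_piFinset, Matrix.mulVecLin_apply,
      funext_iff, Matrix.mulVec, X, Matrix.of_apply, dotProduct_comm (v _)]
    exact forall_comm
  rw [hrows, Fintype.card_piFinset, pow_mul', ← card_univ (α := m), ← prod_const,
    ← prod_mul_distrib, pow_mul', ← prod_const]
  refine prod_le_prod' fun j _ => ?_
  simpa [hrank] using X.mulVecLin.card_fiber_mul_le (fun i => t i j)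

theorem finrank_span_image_filter_lt {κ ι K : Type*} [Finite ι] [Field K] [DecidableEq K]
    {A : Finset κ} {x : κ → ι → K} {c : ι → K} (hc : c ∈ span K (x '' A)) {j : ι} (hcj : c j ≠ 0) :
    finrank K (span K (x '' ({α ∈ A | x α j = 0} : Finset κ))) < finrank K (span K (x '' A)) := by
  refine Submodule.finrank_lt_finrank_of_lt (lt_of_le_of_ne ?_ fun h => hcj ?_)
  · exact span_mono (Set.image_mono (coe_subset.mpr (filter_subset _ _)))
  · have hle : span K (x '' ({α ∈ A | x α j = 0} : Finset κ)) ≤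
        LinearMap.ker (LinearMap.proj j) := by
      rw [span_le]
      rintro _ ⟨α, hα, rfl⟩
      simpa using (mem_filter.mp hα).2
    exact hle (h ▸ hc)

theorem exists_subset_card_eq_linearIndepOn {κ K V : Type*} [DivisionRing K] [AddCommGroup V]
    [Module K V] [DecidableEq V] {A : Finset κ} {x : κ → V} {k : ℕ}
    (hk : k ≤ finrank K (span K (x '' A))) : ∃ S ⊆ A, #S = k ∧ LinearIndepOn K x S := by
  have := FiniteDimensional.span_of_finite K (A.finite_toSet.image x)
  obtain ⟨t, hts, htcard, -, htind⟩ := exists_finset_span_eq_linearIndepOn K (x '' A)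
  obtain ⟨u, huA, hinj, himg⟩ := exists_subset_injOn_image_eq_of_surjOn (A : Set κ) t hts
  have huind : LinearIndepOn K x u := by
    rwa [linearIndepOn_iff_image hinj, ← coe_image, himg]
  have hucard : #u = finrank K (span K (x '' A)) := by
    rw [← htcard, ← himg, card_image_of_injOn hinj]
  obtain ⟨S, hSu, hScard⟩ := exists_subset_card_eq (hk.trans hucard.ge)
  exact ⟨S, hSu.trans (coe_subset.mp huA), hScard, huind.mono (coe_subset.mpr hSu)⟩

lemma exists_smul_eq_of_not_linearIndependent_pair {F M : Type*} [Field F] [AddCommGroup M]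
    [Module F M] {s₀ s₁ : M} (h : ¬ LinearIndependent F ![s₀, s₁]) {A : Finset F}
    (hA : 1 < #A) (β : F) : ∃ α ∈ A, ∃ c : F, s₀ + β • s₁ = c • (s₀ + α • s₁) := by
  simp only [LinearIndependent.pair_iff, not_forall, not_and_or] at h
  obtain ⟨a, b, hab, hne⟩ := h
  by_cases ha : a = 0
  · have hs₁ : s₁ = 0 := by
      simpa [ha, hne.resolve_left (not_not.mpr ha)] using hab
    obtain ⟨α, hα⟩ := card_pos.mp (zero_lt_one.trans hA)
    exact ⟨α, hα, 1, by simp [hs₁]⟩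
  · set σ := -(b / a)
    have hs₀ : s₀ = σ • s₁ := calc
      s₀ = a⁻¹ • (a • s₀) := by rw [smul_smul, inv_mul_cancel₀ ha, one_smul]
      _ = σ • s₁ := by
        rw [eq_neg_of_add_eq_zero_left hab, smul_neg, smul_smul, ← neg_smul, ← div_eq_inv_mul]
    obtain ⟨α, hα, hασ⟩ := exists_mem_ne hA (-σ)
    have hσα : σ + α ≠ 0 := fun h => hασ (by linear_combination h)
    refine ⟨α, hα, (σ + β) / (σ + α), ?_⟩
    rw [hs₀, ← add_smul, ← add_smul, smul_smul, div_mul_cancel₀ _ hσα]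

theorem Nat.choose_le_choose_mul_choose {n k s : ℕ} (hsk : s ≤ k) (hkn : k ≤ n) :
    n.choose s ≤ n.choose k * k.choose s := by
  rw [Nat.choose_mul hsk]
  exact Nat.le_mul_of_pos_right _ (Nat.choose_pos (by omega))

section SyndromeLine

variable {F ι M : Type*} [Field F] [AddCommGroup M] [Module F M]
  {φ : (ι → F) →ₗ[F] M} {s₀ s₁ : M} {A : Finset F} {x : F → ι → F}

lemma exists_mem_span_image_apply_eq (hsyn : ∀ α ∈ A, φ (x α) = s₀ + α • s₁) (hA : 1 < #A) :
    ∃ w₀ ∈ span F (x '' A), ∃ w₁ ∈ span F (x '' A), φ w₀ = s₀ ∧ φ w₁ = s₁ := by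
  obtain ⟨α₁, hα₁, α₂, hα₂, hne⟩ := one_lt_card.mp hA
  have hmem {α} (hα : α ∈ A) : x α ∈ span F (x '' A) := subset_span ⟨α, hα, rfl⟩
  set w₁ := (α₁ - α₂)⁻¹ • (x α₁ - x α₂)
  have hw₁ : φ w₁ = s₁ := by
    rw [map_smul, map_sub, hsyn α₁ hα₁, hsyn α₂ hα₂, add_sub_add_left_eq_sub, ← sub_smul,
      smul_smul, inv_mul_cancel₀ (sub_ne_zero.mpr hne), one_smul]
  have hw₁V : w₁ ∈ span F (x '' A) := smul_mem _ _ (sub_mem (hmem hα₁) (hmem hα₂))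
  refine ⟨x α₁ - α₁ • w₁, sub_mem (hmem hα₁) (smul_mem _ _ hw₁V), w₁, hw₁V, ?_, hw₁⟩
  rw [map_sub, map_smul, hsyn α₁ hα₁, hw₁, add_sub_cancel_right]

variable [DecidableEq F] [Fintype ι] {E Ep : ℕ} {β : F}

lemma linearIndependent_pair_of_forall_ne (hEEp : E ≤ Ep)
    (hwt : ∀ α ∈ A, hammingNorm (x α) ≤ E) (hsyn : ∀ α ∈ A, φ (x α) = s₀ + α • s₁)
    (hβ : ∀ z, hammingNorm z ≤ Ep → φ z ≠ s₀ + β • s₁) (hA : 1 < #A) :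
    LinearIndependent F ![s₀, s₁] := by
  by_contra h
  obtain ⟨α, hα, c, hc⟩ := exists_smul_eq_of_not_linearIndependent_pair h hA β
  exact hβ (c • x α) (hammingNorm_smul_le_hammingNorm.trans ((hwt α hα).trans hEEp))
    (by rw [map_smul, hsyn α hα, hc])

lemma three_le_finrank_span_of_inf_ker_ne_bot (hEEp : E ≤ Ep)
    (hwt : ∀ α ∈ A, hammingNorm (x α) ≤ E) (hsyn : ∀ α ∈ A, φ (x α) = s₀ + α • s₁)
    (hβ : ∀ z, hammingNorm z ≤ Ep → φ z ≠ s₀ + β • s₁) (hA : 1 < #A)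
    (hker : span F (x '' A) ⊓ LinearMap.ker φ ≠ ⊥) :
    3 ≤ finrank F (span F (x '' A)) := by
  set V := span F (x '' A)
  set f := φ.domRestrict V
  have hrange : 2 ≤ finrank F (LinearMap.range f) := by
    obtain ⟨w₀, hw₀, w₁, hw₁, h₀, h₁⟩ := exists_mem_span_image_apply_eq hsyn hA
    have hle : span F (Set.range ![s₀, s₁]) ≤ LinearMap.range f := by
      rw [span_le, Matrix.range_cons, Matrix.range_cons, Matrix.range_empty, Set.union_empty]
      rintro _ (rfl | rfl)
      · exact ⟨⟨w₀, hw₀⟩, h₀⟩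
      · exact ⟨⟨w₁, hw₁⟩, h₁⟩
    have hpair := linearIndependent_pair_of_forall_ne hEEp hwt hsyn hβ hA
    calc 2 = finrank F (span F (Set.range ![s₀, s₁])) := by
          simpa using (finrank_span_eq_card hpair).symm
      _ ≤ _ := Submodule.finrank_mono hle
  have hkernel : 0 < finrank F (LinearMap.ker f) := by
    obtain ⟨c, hc, hc0⟩ := (Submodule.ne_bot_iff _).mp hker
    refine (finrank_pos_iff_exists_ne_zero (M := LinearMap.ker f)).mpr ⟨⟨⟨c, hc.1⟩, hc.2⟩, ?_⟩
    intro h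
    exact hc0 (congrArg (fun v : LinearMap.ker f => ((v : V) : ι → F)) h)
  have := LinearMap.finrank_range_add_finrank_ker f
  omega

theorem card_le_of_inf_ker_eq_bot (hEEp : E ≤ Ep)
    (hwt : ∀ α ∈ A, hammingNorm (x α) ≤ E) (hsyn : ∀ α ∈ A, φ (x α) = s₀ + α • s₁)
    (hβ : ∀ z, hammingNorm z ≤ Ep → φ z ≠ s₀ + β • s₁)
    (hker : span F (x '' A) ⊓ LinearMap.ker φ = ⊥) :
    #A ≤ (Ep + 1) / (Ep - E + 1) := by
  rw [Nat.le_div_iff_mul_le (Nat.succ_pos _)]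
  obtain hA | hA := le_or_gt #A 1
  · exact (Nat.mul_le_mul hA (Nat.succ_le_succ (Nat.sub_le Ep E))).trans_eq (one_mul _)
  obtain ⟨w₀, hw₀, w₁, hw₁, h₀, h₁⟩ := exists_mem_span_image_apply_eq hsyn hA
  -- `φ` is injective on the span, so the `x α` lie on the affine line through `w₀` along `w₁`
  have hline (α) (hα : α ∈ A) : x α = w₀ + α • w₁ := by
    have hmem : x α - (w₀ + α • w₁) ∈ span F (x '' A) ⊓ LinearMap.ker φ :=
      ⟨sub_mem (subset_span ⟨α, hα, rfl⟩) (add_mem hw₀ (smul_mem _ _ hw₁)), by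
        simp [hsyn α hα, h₀, h₁]⟩
    rwa [hker, mem_bot, sub_eq_zero] at hmem
  have hfar : Ep + 1 ≤ hammingNorm (w₀ + β • w₁) :=
    Nat.succ_le_of_lt (lt_of_not_ge fun h => hβ _ h (by simp [h₀, h₁]))
  have hsum : (Ep + 1) * (#A - 1) ≤ #A * E := calc
    _ ≤ hammingNorm (w₀ + β • w₁) * (#A - 1) := Nat.mul_le_mul_right _ hfar
    _ ≤ ∑ α ∈ A, hammingNorm (w₀ + α • w₁) := hammingNorm_add_smul_mul_card_sub_one_le_sum w₀ w₁ A β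
    _ = ∑ α ∈ A, hammingNorm (x α) := sum_congr rfl fun α hα => by rw [hline α hα]
    _ ≤ #A * E := sum_le_card_nsmul A _ E hwt
  obtain ⟨e, rfl⟩ := Nat.exists_eq_add_of_le hEEp
  obtain ⟨a, ha⟩ : ∃ a, #A = a + 1 := ⟨#A - 1, by omega⟩
  rw [ha, Nat.add_sub_cancel] at hsum
  rw [ha, Nat.add_sub_cancel_left]
  nlinarith

theorem exists_subset_card_le_mul_finrank_lt {d : ℕ} (hEd : E < d)
    (hdist : ∀ c ∈ LinearMap.ker φ, c ≠ 0 → d ≤ hammingNorm c)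
    (hwt : ∀ α ∈ A, hammingNorm (x α) ≤ E) (hker : span F (x '' A) ⊓ LinearMap.ker φ ≠ ⊥) :
    ∃ A' ⊆ A, (#A : ℝ) ≤ d / (d - E) * #A' ∧
      finrank F (span F (x '' A')) < finrank F (span F (x '' A)) := by
  obtain ⟨c, ⟨hcV, hcK⟩, hc0⟩ := (Submodule.ne_bot_iff _).mp hker
  obtain ⟨j, hcj, hj⟩ := exists_card_filter_mul_hammingNorm_le_sum A x hc0
  refine ⟨{α ∈ A | x α j = 0}, filter_subset _ _, ?_, finrank_span_image_filter_lt hcV hcj⟩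
  have hcount : #{α ∈ A | x α j ≠ 0} * d ≤ #A * E := calc
    _ ≤ #{α ∈ A | x α j ≠ 0} * hammingNorm c := Nat.mul_le_mul_left _ (hdist c hcK hc0)
    _ ≤ ∑ α ∈ A, hammingNorm (x α) := hj
    _ ≤ #A * E := sum_le_card_nsmul A _ E hwt
  have hnat : #A * d ≤ #{α ∈ A | x α j = 0} * d + #A * E := calc
    #A * d = (#{α ∈ A | x α j = 0} + #{α ∈ A | x α j ≠ 0}) * d := by
      rw [card_filter_add_card_filter_not]
    _ ≤ _ := by rw [add_mul]; exact Nat.add_le_add_left hcount _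
  have hreal : (#A : ℝ) * d ≤ #{α ∈ A | x α j = 0} * d + #A * E := by exact_mod_cast hnat
  rw [div_mul_eq_mul_div, le_div_iff₀ (sub_pos.mpr (by exact_mod_cast hEd))]
  linarith

theorem card_le_of_finrank_span_le {d : ℕ} (hEEp : E ≤ Ep) (hEd : E < d)
    (hdist : ∀ c ∈ LinearMap.ker φ, c ≠ 0 → d ≤ hammingNorm c)
    (hβ : ∀ z, hammingNorm z ≤ Ep → φ z ≠ s₀ + β • s₁) (t : ℕ)
    (hwt : ∀ α ∈ A, hammingNorm (x α) ≤ E) (hsyn : ∀ α ∈ A, φ (x α) = s₀ + α • s₁)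
    (hrank : finrank F (span F (x '' A)) ≤ t + 2) :
    (#A : ℝ) ≤ (((Ep + 1) / (Ep - E + 1) : ℕ) : ℝ) * ((d : ℝ) / (d - E)) ^ t := by
  set B : ℝ := (((Ep + 1) / (Ep - E + 1) : ℕ) : ℝ)
  set ρ : ℝ := d / (d - E)
  have hρ : 1 ≤ ρ := by
    have hdE : (E : ℝ) < d := by exact_mod_cast hEd
    rw [one_le_div (by linarith)]
    linarith [(E.cast_nonneg : (0 : ℝ) ≤ E)]
  have hB : 1 ≤ B := by
    exact Nat.one_le_cast.mpr
      ((Nat.one_le_div_iff (Nat.succ_pos _)).mpr (Nat.succ_le_succ (Nat.sub_le _ _)))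
  induction t using Nat.strong_induction_on generalizing A with
  | _ t ih =>
  obtain hA | hA := le_or_gt #A 1
  · calc (#A : ℝ) ≤ 1 := by exact_mod_cast hA
      _ ≤ B * ρ ^ t := one_le_mul_of_one_le_of_one_le hB (one_le_pow₀ hρ)
  by_cases hker : span F (x '' A) ⊓ LinearMap.ker φ = ⊥
  · calc (#A : ℝ) ≤ B := Nat.cast_le.mpr (card_le_of_inf_ker_eq_bot hEEp hwt hsyn hβ hker)
      _ ≤ B * ρ ^ t := le_mul_of_one_le_right (zero_le_one.trans hB) (one_le_pow₀ hρ)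
  obtain ⟨A', hA'A, hcard, hrank'⟩ := exists_subset_card_le_mul_finrank_lt hEd hdist hwt hker
  have h3 := three_le_finrank_span_of_inf_ker_ne_bot hEEp hwt hsyn hβ hA hker
  obtain ⟨t, rfl⟩ : ∃ t', t = t' + 1 := ⟨t - 1, by omega⟩
  have hA' := ih t (Nat.lt_succ_self t) (fun α hα => hwt α (hA'A hα))
    (fun α hα => hsyn α (hA'A hα)) (by omega)
  calc (#A : ℝ) ≤ ρ * #A' := hcard
    _ ≤ ρ * (B * ρ ^ t) := mul_le_mul_of_nonneg_left hA' (zero_le_one.trans hρ)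
    _ = B * ρ ^ (t + 1) := by ring

end SyndromeLine

theorem ncard_mul_le_of_forall_exists_linearIndepOn {F m ι : Type*} [Field F] [Fintype F]
    [DecidableEq F] [Fintype m] [DecidableEq m] [Fintype ι] [DecidableEq ι]
    (𝓗 : Set (Matrix m ι F)) (E k : ℕ)
    (h𝓗 : ∀ H ∈ 𝓗, ∃ (s₀ s₁ : m → F) (S : Finset F) (x : F → ι → F), #S = k ∧
      LinearIndepOn F x S ∧ ∀ α ∈ S, hammingNorm (x α) ≤ E ∧ H *ᵥ x α = s₀ + α • s₁) :
    𝓗.ncard * Fintype.card F ^ (Fintype.card m * k) ≤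
      Fintype.card F ^ (2 * Fintype.card m) * (Fintype.card F).choose k *
        #{x : ι → F | hammingNorm x ≤ E} ^ k *
          Fintype.card F ^ (Fintype.card m * Fintype.card ι) := by
  classical
  set q := Fintype.card F
  set ball : Finset (ι → F) := {x | hammingNorm x ≤ E}
  set T := (univ : Finset ((m → F) × (m → F))) ×ˢ
    (powersetCard k (univ : Finset F)).sigma fun S => S.pi fun _ => ball
  set G : ((m → F) × (m → F)) × (Σ S : Finset F, ∀ α ∈ S, ι → F) → Finset (Matrix m ι F) := fun τ =>
    {H | LinearIndependent F (fun α : τ.2.1 => τ.2.2 α α.2) ∧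
      ∀ α : τ.2.1, H *ᵥ τ.2.2 α α.2 = τ.1.1 + (α : F) • τ.1.2}
  have hcover : 𝓗 ⊆ ↑(T.biUnion G) := by
    intro H hH
    obtain ⟨s₀, s₁, S, x, hS, hind, hx⟩ := h𝓗 H hH
    simp only [coe_biUnion, Set.mem_iUnion, mem_coe, exists_prop]
    refine ⟨((s₀, s₁), ⟨S, fun α _ => x α⟩), ?_, ?_⟩
    · simp only [T, mem_product, mem_univ, mem_sigma, mem_powersetCard_univ, Finset.mem_pi,
        true_and]
      exact ⟨hS, fun α hα => by simpa [ball] using (hx α hα).1⟩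
    · simp only [G, mem_filter, mem_univ, true_and]
      exact ⟨hind, fun α => (hx α α.2).2⟩
  have hfiber (τ) (hτ : τ ∈ T) :
      #(G τ) * q ^ (Fintype.card m * k) ≤ q ^ (Fintype.card m * Fintype.card ι) := by
    by_cases hind : LinearIndependent F (fun α : τ.2.1 => τ.2.2 α α.2)
    · have hk : Fintype.card τ.2.1 = k := by
        simpa using (mem_powersetCard.mp (mem_sigma.mp (mem_product.mp hτ).2).1).2
      simpa [G, hind, hk] using
        card_filter_mulVec_eq_mul_le hind fun α : τ.2.1 => τ.1.1 + (α : F) • τ.1.2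
    · simp [G, hind]
  have hT : #T = q ^ (2 * Fintype.card m) * (q.choose k * #ball ^ k) := by
    simp only [T, card_product, card_univ, Fintype.card_prod, Fintype.card_fun, card_sigma]
    rw [sum_congr rfl fun S hS => by rw [card_pi, prod_const, (mem_powersetCard.mp hS).2],
      sum_const, card_powersetCard, card_univ, smul_eq_mul, two_mul, pow_add]
  calc 𝓗.ncard * q ^ (Fintype.card m * k)
      ≤ #(T.biUnion G) * q ^ (Fintype.card m * k) := by
        gcongr
        exact (Set.ncard_le_ncard hcover (finite_toSet _)).trans (Set.ncard_coe_finset _).le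
    _ ≤ (∑ τ ∈ T, #(G τ)) * q ^ (Fintype.card m * k) := by gcongr; exact card_biUnion_le
    _ ≤ ∑ _τ ∈ T, q ^ (Fintype.card m * Fintype.card ι) := by
        rw [sum_mul]; exact sum_le_sum hfiber
    _ = _ := by rw [sum_const, smul_eq_mul, hT]; ring

section ParityCheck

variable {F : Type} [Field F] [Fintype F] [DecidableEq F] {r n : ℕ}
  {H : Matrix (Fin r) (Fin n) F} {s₀ s₁ : Fin r → F}

theorem exists_finset_card_eq_of_le_ncard_affLine_inter {E K : ℕ}
    (hline : K ≤ (affLine s₀ s₁ ∩ syndromeBall H E).ncard) :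
    ∃ A : Finset F, #A = K ∧ ∀ α ∈ A, s₀ + α • s₁ ∈ syndromeBall H E := by
  classical
  set Af : Finset F := {α | s₀ + α • s₁ ∈ syndromeBall H E}
  have hsub : affLine s₀ s₁ ∩ syndromeBall H E ⊆ (fun α => s₀ + α • s₁) '' (Af : Set F) := by
    rintro _ ⟨⟨α, rfl⟩, hα⟩
    exact ⟨α, by simpa [Af] using hα, rfl⟩
  have hK : K ≤ #Af := calc
    K ≤ _ := hline
    _ ≤ _ := Set.ncard_le_ncard hsub ((Af.finite_toSet).image _)
    _ ≤ (Af : Set F).ncard := Set.ncard_image_le Af.finite_toSet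
    _ = #Af := Set.ncard_coe_finset Af
  obtain ⟨A, hAf, hA⟩ := exists_subset_card_eq hK
  exact ⟨A, hA, fun α hα => (mem_filter.mp (hAf hα)).2⟩

theorem exists_linearIndepOn_of_le_ncard_affLine_inter {E Ep d s K : ℕ} (hEEp : E ≤ Ep)
    (hEd : E < d) (hK : (((Ep + 1) / (Ep - E + 1) : ℕ) : ℝ) * ((d : ℝ) / (d - E)) ^ s < K)
    (hline : K ≤ (affLine s₀ s₁ ∩ syndromeBall H E).ncard)
    (hfar : ¬ affLine s₀ s₁ ⊆ syndromeBall H Ep)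
    (hdist : ∀ c : Fin n → F, H *ᵥ c = 0 → c ≠ 0 → d ≤ hammingNorm c) :
    s + 3 ≤ K ∧ K ≤ Fintype.card F ∧ ∃ (S : Finset F) (x : F → Fin n → F), #S = s + 3 ∧
      LinearIndepOn F x S ∧ ∀ α ∈ S, hammingNorm (x α) ≤ E ∧ H *ᵥ x α = s₀ + α • s₁ := by
  obtain ⟨A, hAcard, hA⟩ := exists_finset_card_eq_of_le_ncard_affLine_inter hline
  have hx (α : F) : ∃ z, α ∈ A → hammingNorm z ≤ E ∧ H *ᵥ z = s₀ + α • s₁ := by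
    by_cases hα : α ∈ A
    · obtain ⟨z, hz⟩ := hA α hα
      exact ⟨z, fun _ => hz⟩
    · exact ⟨0, fun h => absurd h hα⟩
  choose x hx using hx
  obtain ⟨_, ⟨β, rfl⟩, hβ⟩ := Set.not_subset.mp hfar
  have hrank : s + 3 ≤ finrank F (span F (x '' A)) := by
    by_contra! hlt
    have := card_le_of_finrank_span_le (φ := H.mulVecLin) hEEp hEd
      (fun c hc hc0 => hdist c hc hc0) (fun z hz heq => hβ ⟨z, hz, heq⟩) s
      (fun α hα => (hx α hα).1) (fun α hα => (hx α hα).2) (by omega)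
    rw [hAcard] at this
    linarith
  obtain ⟨S, hSA, hScard, hS⟩ := exists_subset_card_eq_linearIndepOn hrank
  exact ⟨hScard ▸ hAcard ▸ card_le_card hSA, hAcard ▸ card_le_univ A, S, x, hScard, hS,
    fun α hα => hx α (hSA hα)⟩

end ParityCheck

theorem stmt_10_general {F : Type} [Field F] [Fintype F] [DecidableEq F]
    (r n : ℕ)
    (E Ep d s K : ℕ) (hEEp : E ≤ Ep) (hEd : E < d)
    (γ : ℝ) (hγ : γ = ((d : ℝ) - E) / d)
    (B : ℕ) (hB : B = (Ep + 1) / (Ep - E + 1))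
    (hK : (B : ℝ) * γ⁻¹ ^ s < (K : ℝ)) :
    ({H : Matrix (Fin r) (Fin n) F | ∃ s₀ s₁ : Fin r → F,
          K ≤ (affLine s₀ s₁ ∩ syndromeBall H E).ncard ∧
          ¬ affLine s₀ s₁ ⊆ syndromeBall H Ep ∧
          (∀ c : Fin n → F, H.mulVec c = 0 → c ≠ 0 → d ≤ hammingNorm c)}.ncard : ℝ) /
        (Fintype.card F : ℝ) ^ (r * n)
      ≤ (Fintype.card F : ℝ) ^ (2 * r) * ((Fintype.card F).choose K : ℝ) *
          (K.choose (s + 3) : ℝ) *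
          ((∑ i ∈ Finset.range (E + 1), n.choose i * (Fintype.card F - 1) ^ i : ℕ) : ℝ) ^ (s + 3) /
          (Fintype.card F : ℝ) ^ (r * (s + 3)) := by
  rw [hγ, inv_div, hB] at hK
  set 𝓑 := {H : Matrix (Fin r) (Fin n) F | ∃ s₀ s₁ : Fin r → F,
    K ≤ (affLine s₀ s₁ ∩ syndromeBall H E).ncard ∧ ¬ affLine s₀ s₁ ⊆ syndromeBall H Ep ∧
      ∀ c : Fin n → F, H.mulVec c = 0 → c ≠ 0 → d ≤ hammingNorm c}
  obtain hempty | ⟨_, s₀, s₁, hline, hfar, hdist⟩ := 𝓑.eq_empty_or_nonempty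
  · rw [hempty, Set.ncard_empty, Nat.cast_zero, zero_div]
    positivity
  obtain ⟨hsK, hKq, -⟩ :=
    exists_linearIndepOn_of_le_ncard_affLine_inter hEEp hEd hK hline hfar hdist
  have hcount := ncard_mul_le_of_forall_exists_linearIndepOn 𝓑 E (s + 3) <| by
    rintro H ⟨s₀, s₁, hline, hfar, hdist⟩
    exact ⟨s₀, s₁,
      (exists_linearIndepOn_of_le_ncard_affLine_inter hEEp hEd hK hline hfar hdist).2.2⟩
  have hball := card_filter_hammingNorm_le_le_sum (ι := Fin n) (F := F) E
  simp only [Fintype.card_fin] at hcount hball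
  rw [div_le_div_iff₀ (by positivity) (by positivity)]
  have hnat := hcount.trans <| Nat.mul_le_mul_right _ <| Nat.mul_le_mul
    (Nat.mul_le_mul_left _ (Nat.choose_le_choose_mul_choose hsK hKq)) (Nat.pow_le_pow_left hball _)
  rw [← mul_assoc] at hnat
  exact_mod_cast hnat

/-- Moment bound for bad syndrome lines: the probability (over a uniformly random
parity-check matrix `H`) that some syndrome line has at least `K` points in `H_E`, is not
contained in `H_{E⁺}`, and the code has minimum distance at least `d`, is at most
`q^{2r}·C(q,K)·C(K,s+3)·|B_E|^{s+3}·q^{−r(s+3)}`. -/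
theorem stmt_10 {F : Type} [Field F] [Fintype F] [DecidableEq F]
    (r n : ℕ) (hr : 0 < r) (hn : 0 < n)
    (E Ep d s K : ℕ) (hE0 : 0 < E) (hEEp : E ≤ Ep) (hEd : E < d)
    (γ : ℝ) (hγ : γ = ((d : ℝ) - E) / d)
    (B : ℕ) (hB : B = (Ep + 1) / (Ep - E + 1))
    (hK2 : 2 ≤ K) (hK : (B : ℝ) * γ⁻¹ ^ s < (K : ℝ)) :
    ({H : Matrix (Fin r) (Fin n) F | ∃ s₀ s₁ : Fin r → F,
          K ≤ (affLine s₀ s₁ ∩ syndromeBall H E).ncard ∧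
          ¬ affLine s₀ s₁ ⊆ syndromeBall H Ep ∧
          (∀ c : Fin n → F, H.mulVec c = 0 → c ≠ 0 → d ≤ hammingNorm c)}.ncard : ℝ) /
        (Fintype.card F : ℝ) ^ (r * n)
      ≤ (Fintype.card F : ℝ) ^ (2 * r) * ((Fintype.card F).choose K : ℝ) *
          (K.choose (s + 3) : ℝ) *
          ((∑ i ∈ Finset.range (E + 1), n.choose i * (Fintype.card F - 1) ^ i : ℕ) : ℝ) ^ (s + 3) /
          (Fintype.card F : ℝ) ^ (r * (s + 3)) :=
  stmt_10_general r n E Ep d s K hEEp hEd γ hγ B hB hK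
end

section
/- Let q be a prime power, H ∈ 𝔽_q^{r×n}, and let C = ker(H) be a linear code with minimum distance d(C) ≥ d, where d > E > 0; set γ := (d − E)/d. Let S = s₀ + span(s₁,…,s_m) ⊆ 𝔽_q^r be an affine syndrome space of dimension m (s₁,…,s_m linearly independent over 𝔽_q), and let h := dim_{𝔽_q} span{s₀, s₁, …, s_m}. Let β₁,…,β_K ∈ 𝔽_q^m be pairwise distinct points that are not all contained in any affine hyperplane of 𝔽_q^m. Let X = [x₁|⋯|x_K] ∈ 𝔽_q^{n×K} satisfy Hx_j = s₀ + Σ_{i=1}^{m} (β_j)_i s_i and wt(x_j) ≤ E for all j ∈ [K], and suppose rank(X) = t ≥ h + 1. Then there exists a subset J ⊆ [K] with |J| ≥ Kγ such that the restricted matrix X_J = [x_j]_{j∈J} still satisfies Hx_j = s₀ + Σ_{i=1}^{m} (β_j)_i s_i and wt(x_j) ≤ E for all j ∈ J, and rank(X_J) ≤ t − 1. -/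
/-!
The columns of `X` span a `t`-dimensional space `V` which `H` maps into the `h`-dimensional span
of `s₀, s₁, …, s_m`. Since `t > h`, some nonzero `c ∈ V` lies in `ker H = C`, so `wt(c) ≥ d`.
Each column has weight at most `E`, so the `K` columns have at most `K E` nonzero entries in
total, and averaging over the support of `c` gives a coordinate `i₀` with `c i₀ ≠ 0` at which at
most `K E / d` columns are nonzero. The columns vanishing at `i₀` form `X_J` with
`|J| ≥ K (d - E) / d`; they span a subspace of `V ∩ {v | v i₀ = 0}`, which misses `c`, so the rank
drops.
-/

open Finset Module Submodule

theorem LinearMap.exists_ne_zero_mem_of_map_le_of_finrank_lt {K V V₂ : Type*} [DivisionRing K]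
    [AddCommGroup V] [Module K V] [AddCommGroup V₂] [Module K V₂] (f : V →ₗ[K] V₂)
    {P : Submodule K V} {Q : Submodule K V₂} [FiniteDimensional K P] [FiniteDimensional K Q]
    (hPQ : P.map f ≤ Q) (hlt : finrank K Q < finrank K P) :
    ∃ c ∈ P, c ≠ 0 ∧ f c = 0 := by
  have hker : LinearMap.ker (f.restrict (map_le_iff_le_comap.mp hPQ)) ≠ ⊥ :=
    LinearMap.ker_ne_bot_of_finrank_lt hlt
  obtain ⟨v, hv, hv0⟩ := exists_mem_ne_zero_of_ne_bot hker
  exact ⟨v, v.2, fun h => hv0 (Subtype.ext h), congrArg Subtype.val hv⟩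

theorem exists_mem_card_mul_card_ne_zero_le {ι α β : Type*} [Fintype ι] [Fintype α] [Zero β]
    [DecidableEq β] (x : ι → α → β) {E : ℕ} (hE : ∀ j, hammingNorm (x j) ≤ E)
    {T : Finset α} (hT : T.Nonempty) :
    ∃ i ∈ T, #T * #{j | x j i ≠ 0} ≤ Fintype.card ι * E := by
  obtain ⟨i₀, hi₀, hmin⟩ := T.exists_min_image (fun i => #{j | x j i ≠ 0}) hT
  refine ⟨i₀, hi₀, ?_⟩
  calc #T * #{j | x j i₀ ≠ 0}
      ≤ ∑ i ∈ T, #(univ.bipartiteAbove (fun i j => x j i ≠ 0) i) := by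
        rw [← smul_eq_mul]
        exact T.card_nsmul_le_sum _ _ hmin
    _ = ∑ j, #(T.bipartiteBelow (fun i j => x j i ≠ 0) j) :=
        sum_card_bipartiteAbove_eq_sum_card_bipartiteBelow _
    _ ≤ ∑ _j : ι, E := sum_le_sum fun j _ =>
        (card_le_card (filter_subset_filter _ (subset_univ T))).trans (hE j)
    _ = Fintype.card ι * E := by simp

theorem mul_sub_div_le_of_add_eq_of_mul_le {a b d E K : ℕ} (hEd : E < d) (hab : a + b = K)
    (hb : d * b ≤ K * E) : (K : ℝ) * ((d - E) / d) ≤ a := by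
  have hd : (0 : ℝ) < d := by exact_mod_cast (Nat.zero_le E).trans_lt hEd
  have hab' : (a : ℝ) + b = K := by exact_mod_cast hab
  have hb' : (d : ℝ) * b ≤ K * E := by exact_mod_cast hb
  rw [mul_div_assoc', div_le_iff₀ hd]
  nlinarith

section Rank

variable {K ι α : Type*} [Field K]

theorem Matrix.rank_of_cols [Fintype ι] (x : ι → α → K) :
    (Matrix.of fun i j => x j i).rank = finrank K (span K (Set.range x)) := by
  rw [Matrix.rank_eq_finrank_span_cols]
  rfl

theorem Matrix.rank_of_cols_subset_lt [Fintype ι] [Fintype α] (x : ι → α → K) {c : α → K}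
    (hc : c ∈ span K (Set.range x)) {i₀ : α} (hci₀ : c i₀ ≠ 0) (J : Finset ι)
    (hJ : ∀ j ∈ J, x j i₀ = 0) :
    (Matrix.of fun i (j : J) => x j i).rank < (Matrix.of fun i j => x j i).rank := by
  rw [Matrix.rank_of_cols, Matrix.rank_of_cols]
  set V' := span K (Set.range x) ⊓ LinearMap.ker (LinearMap.proj i₀ : (α → K) →ₗ[K] K)
  have hsub : span K (Set.range fun j : J => x j) ≤ V' := by
    refine span_le.mpr ?_
    rintro - ⟨j, rfl⟩
    exact ⟨subset_span ⟨j, rfl⟩, hJ j j.2⟩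
  have hlt : V' < span K (Set.range x) :=
    inf_le_left.lt_of_ne fun heq => hci₀ (heq.ge hc).2
  exact (finrank_mono hsub).trans_lt (finrank_lt_finrank_of_lt hlt)

end Rank

theorem stmt_15_general {F : Type} [Field F] [DecidableEq F] {r n : ℕ}
    (H : Matrix (Fin r) (Fin n) F) (d E : ℕ) (hEd : E < d)
    (hdist : ∀ c : Fin n → F, H.mulVec c = 0 → c ≠ 0 → d ≤ hammingNorm c)
    (γ : ℝ) (hγ : γ = ((d : ℝ) - E) / d)
    (m : ℕ) (s₀ : Fin r → F) (s : Fin m → Fin r → F)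
    (h : ℕ)
    (hh : h = Module.finrank F (Submodule.span F (insert s₀ (Set.range s))))
    (K : ℕ) (β : Fin K → Fin m → F)
    (x : Fin K → Fin n → F)
    (hwit : ∀ j : Fin K,
      H.mulVec (x j) = s₀ + ∑ i, β j i • s i ∧ hammingNorm (x j) ≤ E)
    (t : ℕ) (ht : h + 1 ≤ t)
    (hrank : (Matrix.of fun (i : Fin n) (j : Fin K) => x j i).rank = t) :
    ∃ J : Finset (Fin K),
      (K : ℝ) * γ ≤ (J.card : ℝ) ∧
      (Matrix.of fun (i : Fin n) (j : J) => x j i).rank ≤ t - 1 := by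
  set W := span F (insert s₀ (Set.range s))
  have hmap : (span F (Set.range x)).map H.mulVecLin ≤ W := by
    rw [map_span, span_le]
    rintro - ⟨-, ⟨j, rfl⟩, rfl⟩
    rw [Matrix.mulVecLin_apply, (hwit j).1]
    exact W.add_mem (subset_span (Set.mem_insert _ _)) (W.sum_mem fun i _ =>
      W.smul_mem _ (subset_span (Set.mem_insert_of_mem _ ⟨i, rfl⟩)))
  obtain ⟨c, hcV, hc0, hHc⟩ := H.mulVecLin.exists_ne_zero_mem_of_map_le_of_finrank_lt hmap
    (by rw [← Matrix.rank_of_cols, hrank]; omega)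
  have hdc : d ≤ #{i | c i ≠ 0} := hdist c hHc hc0
  obtain ⟨i₀, hci₀, hcount⟩ := exists_mem_card_mul_card_ne_zero_le x (fun j => (hwit j).2)
    (T := {i | c i ≠ 0}) (card_pos.mp (by omega))
  set J : Finset (Fin K) := {j | x j i₀ = 0}
  have hsplit : #J + #{j | x j i₀ ≠ 0} = K := by
    simpa using card_filter_add_card_filter_not (s := univ) (fun j => x j i₀ = 0)
  refine ⟨J, hγ ▸ mul_sub_div_le_of_add_eq_of_mul_le hEd hsplit ?_, ?_⟩
  · simpa using (Nat.mul_le_mul_right _ hdc).trans hcount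
  · have := Matrix.rank_of_cols_subset_lt x hcV (mem_filter.mp hci₀).2 J
      fun j hj => (mem_filter.mp hj).2
    omega

/-- Rank-reduction step for witness matrices of an affine syndrome `m`-space:
if the evaluation points avoid every affine hyperplane and the witness rank is at least
`h + 1`, one keeps a `γ`-fraction of the columns and drops the rank by one. -/
theorem stmt_15 {F : Type} [Field F] [Fintype F] [DecidableEq F] {r n : ℕ}
    (H : Matrix (Fin r) (Fin n) F) (d E : ℕ) (hE0 : 0 < E) (hEd : E < d)
    (hdist : ∀ c : Fin n → F, H.mulVec c = 0 → c ≠ 0 → d ≤ hammingNorm c)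
    (γ : ℝ) (hγ : γ = ((d : ℝ) - E) / d)
    (m : ℕ) (hm : 1 ≤ m) (s₀ : Fin r → F) (s : Fin m → Fin r → F)
    (hs : LinearIndependent F s)
    (h : ℕ)
    (hh : h = Module.finrank F (Submodule.span F (insert s₀ (Set.range s))))
    (K : ℕ) (β : Fin K → Fin m → F) (hβ : Function.Injective β)
    (hplane : ¬ ∃ (a : Fin m → F) (b : F), a ≠ 0 ∧ ∀ j : Fin K, ∑ i, a i * β j i = b)
    (x : Fin K → Fin n → F)
    (hwit : ∀ j : Fin K,
      H.mulVec (x j) = s₀ + ∑ i, β j i • s i ∧ hammingNorm (x j) ≤ E)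
    (t : ℕ) (ht : h + 1 ≤ t)
    (hrank : (Matrix.of fun (i : Fin n) (j : Fin K) => x j i).rank = t) :
    ∃ J : Finset (Fin K),
      (K : ℝ) * γ ≤ (J.card : ℝ) ∧
      (Matrix.of fun (i : Fin n) (j : J) => x j i).rank ≤ t - 1 :=
  stmt_15_general H d E hEd hdist γ hγ m s₀ s h hh K β x hwit t ht hrank
end

section
/- Let q be a prime power, ℓ ≥ 1, and a₀, a₁, …, a_ℓ ∈ 𝔽_q^n. Define the degree-ℓ polynomial curve Γ(α) := a₀ + Σ_{j=1}^{ℓ} α^j a_j for α ∈ 𝔽_q, and let A = [a₀|⋯|a_ℓ] ∈ 𝔽_q^{n×(ℓ+1)}. Let 0 ≤ E ≤ E⁺ ≤ n. If rowwt(A) > E⁺, then |{α ∈ 𝔽_q : Γ(α) ∈ B_E}| ≤ ℓ·(E⁺ + 1)/(E⁺ − E + 1). -/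
/-!
Restrict to `E⁺ + 1` coordinates in the row support of `A` and count the pairs `(α, i)` with
`Γ(α)_i = 0`. Each `α` with `Γ(α) ∈ B_E` contributes at least `E⁺ + 1 - E` such pairs, while
each coordinate `i` contributes at most `ℓ`, because `α ↦ Γ(α)_i` is a nonzero polynomial of
degree at most `ℓ`.
-/

open Finset Polynomial

theorem card_filter_sum_mul_pow_eq_zero_le {R : Type*} [CommRing R] [IsDomain R]
    [DecidableEq R] {ℓ : ℕ} (c : Fin (ℓ + 1) → R) (hc : c ≠ 0) (s : Finset R) :
    #{α ∈ s | ∑ j, c j * α ^ (j : ℕ) = 0} ≤ ℓ := by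
  set p : R[X] := ∑ j : Fin (ℓ + 1), monomial j (c j)
  have hcoeff : ∀ j : Fin (ℓ + 1), p.coeff j = c j := by
    intro j
    simp only [p, finsetSum_coeff, coeff_monomial, Fin.val_inj, sum_ite_eq', mem_univ,
      if_true]
  have hp : p ≠ 0 := by
    obtain ⟨j, hj⟩ := Function.ne_iff.1 hc
    exact fun h => hj (by rw [← hcoeff j, h, coeff_zero, Pi.zero_apply])
  have hdeg : p.natDegree ≤ ℓ :=
    natDegree_sum_le_of_forall_le _ _ fun j _ => (natDegree_monomial_le _).trans j.is_le
  refine (card_le_degree_of_subset_roots fun α hα => ?_).trans hdeg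
  rw [Finset.mem_val, mem_filter] at hα
  rw [mem_roots hp, IsRoot, eval_finsetSum]
  simpa only [eval_monomial] using hα.2

theorem card_mul_sub_le_of_hammingNorm_le {ι κ M : Type*} [Fintype κ] [Zero M]
    [DecidableEq M] (v : ι → κ → M) (S : Finset ι) (T : Finset κ) {E ℓ : ℕ}
    (hS : ∀ x ∈ S, hammingNorm (v x) ≤ E) (hT : ∀ i ∈ T, #{x ∈ S | v x i = 0} ≤ ℓ) :
    #S * (#T - E) ≤ #T * ℓ := by
  refine card_mul_le_card_mul (fun x i => v x i = 0) (fun x hx => ?_) hT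
  have hnonzero : #{i ∈ T | ¬v x i = 0} ≤ E :=
    (card_le_card fun i hi => by simpa using (mem_filter.1 hi).2).trans (hS x hx)
  have := card_filter_add_card_filter_not (s := T) (fun i => v x i = 0)
  simp only [bipartiteAbove]
  omega

theorem curve_eq_sum_pow_smul {R M : Type*} [Semiring R] [AddCommMonoid M] [Module R M]
    {ℓ : ℕ} (a : Fin (ℓ + 1) → M) (α : R) :
    a 0 + ∑ j : Fin ℓ, α ^ ((j : ℕ) + 1) • a j.succ =
      ∑ j : Fin (ℓ + 1), α ^ (j : ℕ) • a j := by
  simp [Fin.sum_univ_succ]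

theorem stmt_19_general {F : Type} [Field F] [Fintype F] [DecidableEq F] {n : ℕ}
    (ℓ : ℕ) (a : Fin (ℓ + 1) → Fin n → F)
    (E Ep : ℕ) (hEEp : E ≤ Ep)
    (hrow : Ep < ({i : Fin n | ∃ j, a j i ≠ 0}).ncard) :
    (({α : F |
        hammingNorm (a 0 + ∑ j : Fin ℓ, α ^ ((j : ℕ) + 1) • a j.succ) ≤ E}).ncard : ℝ) ≤
      (ℓ : ℝ) * ((Ep : ℝ) + 1) / ((Ep : ℝ) - E + 1) := by
  set S : Finset F := {α | hammingNorm (∑ j : Fin (ℓ + 1), α ^ (j : ℕ) • a j) ≤ E}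
  obtain ⟨T, hTsupp, hTcard⟩ := exists_subset_card_eq (s := {i | ∃ j, a j i ≠ 0})
    (n := Ep + 1) (by rwa [Set.ncard_eq_toFinset_card', Set.toFinset_ofPred] at hrow)
  have hroots : ∀ i ∈ T, #{α ∈ S | (∑ j : Fin (ℓ + 1), α ^ (j : ℕ) • a j) i = 0} ≤ ℓ := by
    intro i hi
    obtain ⟨j, hj⟩ := (mem_filter.1 (hTsupp hi)).2
    have hc : (fun j => a j i) ≠ 0 := fun h => hj (congrFun h j)
    simpa [Finset.sum_apply, mul_comm] using card_filter_sum_mul_pow_eq_zero_le _ hc S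
  have hcount := card_mul_sub_le_of_hammingNorm_le _ S T (fun α hα => (mem_filter.1 hα).2)
    hroots
  rw [hTcard] at hcount
  have hdenom : (0 : ℝ) < Ep - E + 1 := by linarith [(Nat.cast_le (α := ℝ)).2 hEEp]
  simp_rw [curve_eq_sum_pow_smul]
  rw [Set.ncard_eq_toFinset_card', Set.toFinset_ofPred, le_div_iff₀ hdenom]
  replace hcount := (Nat.cast_le (α := ℝ)).2 hcount
  push_cast [Nat.cast_sub (by omega : E ≤ Ep + 1)] at hcount
  linarith

/-- If the coefficient matrix of a degree-`ℓ` polynomial curve has row weight exceeding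
`E⁺`, then at most `ℓ·(E⁺+1)/(E⁺−E+1)` points of the curve lie in the Hamming ball
`B_E`. -/
theorem stmt_19 {F : Type} [Field F] [Fintype F] [DecidableEq F] {n : ℕ}
    (ℓ : ℕ) (hℓ : 1 ≤ ℓ) (a : Fin (ℓ + 1) → Fin n → F)
    (E Ep : ℕ) (hEEp : E ≤ Ep) (hEpn : Ep ≤ n)
    (hrow : Ep < ({i : Fin n | ∃ j, a j i ≠ 0}).ncard) :
    (({α : F |
        hammingNorm (a 0 + ∑ j : Fin ℓ, α ^ ((j : ℕ) + 1) • a j.succ) ≤ E}).ncard : ℝ) ≤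
      (ℓ : ℝ) * ((Ep : ℝ) + 1) / ((Ep : ℝ) - E + 1) :=
  stmt_19_general ℓ a E Ep hEEp hrow
end
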